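/- arXiv:1811.02550 — 5 statements merged into one kernel-verified Lean document; each statement's English description precedes it below -/
import Mathlib

section
/- The number of partitions that are simultaneously a-core and b-core, for coprime positive integers a and b, equals (1/(a+b)) * binomial(a+b, b). -/
/-!
A partition is determined by its `β`-set, the set of hook lengths of its first column, and its
hook lengths are the differences `s - t` with `s` in the `β`-set and `t < s` outside it. So it is
an `a`-core iff its `β`-set is closed under subtracting `a`.

As `gcd(a, b) = 1`, every residue class mod `b` is that of `x * a` for a unique `x < b`, and in the
`β`-set of an `(a, b)`-core this class is `{x * a - k * b | H x < k, k * b < x * a}` for some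
`H x`. The function `H` is monotone with `H x * b ≤ x * a`, a rational Dyck path. Recording the
times of its north steps turns such a path into a `b`-subset of `ℤ/(a + b)` satisfying a ballot
condition, and by the cycle lemma exactly one of the `a + b` rotations of any `b`-subset is ballot.
-/

/-- The hook length of the cell `(i, j)` of a Young diagram: the number of cells
directly to the right in the same row, plus the number of cells directly below
in the same column, plus one for the cell itself. -/
def YoungDiagram.hookLength (d : YoungDiagram) (i j : ℕ) : ℕ :=
  (d.rowLen i - j) + (d.colLen j - i) - 1

/-- A Young diagram (partition) is an `a`-core if none of its hook lengths equals `a`. -/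
def YoungDiagram.IsCore (d : YoungDiagram) (a : ℕ) : Prop :=
  ∀ c ∈ d.cells, d.hookLength c.1 c.2 ≠ a

open Finset

namespace RationalCatalan

def IsSubClosed (a : ℕ) (S : Finset ℕ) : Prop := ∀ s ∈ S, a ≤ s → s - a ∈ S

def IsCoreBetaSet (a b : ℕ) (S : Finset ℕ) : Prop :=
  0 ∉ S ∧ IsSubClosed a S ∧ IsSubClosed b S

end RationalCatalan

open RationalCatalan

lemma Fin.add_sub_le_of_strictMono {m : ℕ} {f : Fin m → ℕ} (hf : StrictMono f) {x y : Fin m}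
    (hxy : x ≤ y) : f x + (y - x : ℕ) ≤ f y := by
  suffices ∀ k (y : Fin m), (y : ℕ) = x + k → f x + k ≤ f y from this _ y (by omega)
  intro k
  induction k with
  | zero => intro y hy; rw [show y = x from Fin.ext (by omega)]; omega
  | succ k ih =>
    intro y hy
    have := ih ⟨x + k, by omega⟩ rfl
    have := @hf ⟨x + k, by omega⟩ y (by rw [Fin.lt_def]; dsimp only; omega)
    omega

/-! ### `β`-sets -/

namespace YoungDiagram

variable (d : YoungDiagram)

def betaSet : Finset ℕ :=
  univ.image fun i : Fin (d.colLen 0) => d.hookLength i 0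

/-- The `j`-th smallest element of `ℕ \ d.betaSet`. -/
def gap (j : ℕ) : ℕ := j + d.colLen 0 - d.colLen j

variable {d}

lemma hookLength_add {i j : ℕ} (h : (i, j) ∈ d) :
    d.hookLength i j + i + j + 1 = d.rowLen i + d.colLen j := by
  have := mem_iff_lt_rowLen.mp h
  have := mem_iff_lt_colLen.mp h
  simp only [hookLength]
  omega

lemma hookLength_pos {i j : ℕ} (h : (i, j) ∈ d) : 0 < d.hookLength i j := by
  have := mem_iff_lt_rowLen.mp h
  have := mem_iff_lt_colLen.mp h
  simp only [hookLength]
  omega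

lemma hookLength_zero_add {i : ℕ} (hi : i < d.colLen 0) :
    d.hookLength i 0 + i + 1 = d.rowLen i + d.colLen 0 := by
  simpa using hookLength_add (mem_iff_lt_colLen.mpr hi)

lemma hookLength_zero_add_sub_le {i k : ℕ} (hik : i ≤ k) (hk : k < d.colLen 0) :
    d.hookLength k 0 + (k - i) ≤ d.hookLength i 0 := by
  have := hookLength_zero_add hk
  have := hookLength_zero_add (hik.trans_lt hk)
  have := d.rowLen_anti i k hik
  omega

lemma mem_betaSet {t : ℕ} : t ∈ d.betaSet ↔ ∃ i < d.colLen 0, d.hookLength i 0 = t := by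
  simp [betaSet, Fin.exists_iff]

lemma hookLength_zero_strictAnti :
    StrictAnti fun i : Fin (d.colLen 0) => d.hookLength i 0 := fun i k hik => by
  have := hookLength_zero_add_sub_le hik.le k.isLt
  simp only [Fin.lt_def] at hik ⊢
  omega

lemma card_betaSet : #d.betaSet = d.colLen 0 := by
  rw [betaSet, card_image_of_injective _ hookLength_zero_strictAnti.injective, card_univ,
    Fintype.card_fin]

lemma zero_notMem_betaSet : 0 ∉ d.betaSet := by
  rw [mem_betaSet]
  rintro ⟨i, hi, h0⟩
  exact (hookLength_pos (mem_iff_lt_colLen.mpr hi)).ne' h0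

lemma hookLength_add_gap {i j : ℕ} (h : (i, j) ∈ d) :
    d.hookLength i j + d.gap j = d.hookLength i 0 := by
  have := hookLength_add h
  have := hookLength_zero_add (mem_iff_lt_colLen.mp (d.up_left_mem le_rfl (Nat.zero_le j) h))
  have := d.colLen_anti 0 j (Nat.zero_le j)
  have := mem_iff_lt_rowLen.mp h
  simp only [gap]
  omega

lemma hookLength_zero_lt_gap {i j : ℕ} (hi : i < d.colLen 0) (h : (i, j) ∉ d) :
    d.hookLength i 0 < d.gap j := by
  have := hookLength_zero_add hi
  have := d.colLen_anti 0 j (Nat.zero_le j)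
  have := not_lt.mp (mt mem_iff_lt_rowLen.mpr h)
  have := not_lt.mp (mt mem_iff_lt_colLen.mpr h)
  simp only [gap]
  omega

lemma gap_notMem_betaSet (j : ℕ) : d.gap j ∉ d.betaSet := by
  rw [mem_betaSet]
  rintro ⟨i, hi, hij⟩
  by_cases h : (i, j) ∈ d
  · have := hookLength_add_gap h
    have := hookLength_pos h
    omega
  · exact (hookLength_zero_lt_gap hi h).ne hij

lemma gap_strictMono : StrictMono d.gap := strictMono_nat_of_lt_succ fun j => by
  have := d.colLen_anti j (j + 1) j.le_succ
  have := d.colLen_anti 0 j (Nat.zero_le j)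
  simp only [gap]
  omega

/-- The `β`-set and the first `rowLen 0` gaps together fill up `range (colLen 0 + rowLen 0)`. -/
lemma exists_gap_eq_of_notMem_betaSet {t : ℕ} (ht : t ∉ d.betaSet) : ∃ j, d.gap j = t := by
  set r := d.colLen 0
  set c := d.rowLen 0
  by_cases htc : t < r + c
  · have hsub : d.betaSet ∪ (range c).image d.gap ⊆ range (r + c) := by
      refine union_subset (fun t ht => ?_) (fun t ht => ?_) <;> rw [mem_range]
      · obtain ⟨i, hi, rfl⟩ := mem_betaSet.mp ht
        have := hookLength_zero_add hi
        have := d.rowLen_anti 0 i (Nat.zero_le i)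
        omega
      · obtain ⟨j, hj, rfl⟩ := mem_image.mp ht
        simp only [gap, mem_range] at hj ⊢
        omega
    have hcard : #(range (r + c)) ≤ #(d.betaSet ∪ (range c).image d.gap) := by
      rw [card_union_of_disjoint, card_betaSet, card_image_of_injective _ gap_strictMono.injective,
        card_range, card_range]
      exact disjoint_left.mpr fun t ht ht' => by
        obtain ⟨j, -, rfl⟩ := mem_image.mp ht'
        exact gap_notMem_betaSet j ht
    have := eq_of_subset_of_card_le hsub hcard ▸ mem_range.mpr htc
    obtain ⟨j, -, hj⟩ := mem_image.mp ((mem_union.mp this).resolve_left ht)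
    exact ⟨j, hj⟩
  · refine ⟨t - r, ?_⟩
    have : d.colLen (t - r) = 0 := by
      by_contra h0
      have := mem_iff_lt_rowLen.mp
        (mem_iff_lt_colLen (μ := d) (i := 0).mpr (Nat.pos_of_ne_zero h0))
      omega
    simp only [gap, this]
    omega

theorem isCore_iff_isSubClosed (a : ℕ) : d.IsCore a ↔ IsSubClosed a d.betaSet := by
  constructor
  · intro hcore s hs has
    by_contra hsa
    obtain ⟨i, hi, rfl⟩ := mem_betaSet.mp hs
    obtain ⟨j, hj⟩ := exists_gap_eq_of_notMem_betaSet hsa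
    have ha : a ≠ 0 := by rintro rfl; exact hsa (by simpa using hs)
    have hij : (i, j) ∈ d := by
      by_contra h
      have := hookLength_zero_lt_gap hi h
      omega
    have := hookLength_add_gap hij
    exact hcore (i, j) ((mem_cells _).mpr hij) (by dsimp only; omega)
  · intro hclosed ⟨i, j⟩ hij hcore
    dsimp only at hcore
    subst hcore
    rw [mem_cells] at hij
    have hsum := hookLength_add_gap hij
    have hbeta : d.hookLength i 0 ∈ d.betaSet :=
      mem_betaSet.mpr ⟨i, mem_iff_lt_colLen.mp (d.up_left_mem le_rfl (Nat.zero_le j) hij), rfl⟩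
    have := hclosed _ hbeta (by omega)
    rw [show d.hookLength i 0 - d.hookLength i j = d.gap j by omega] at this
    exact gap_notMem_betaSet j this

lemma hookLength_zero_eq_orderEmbOfFin {S : Finset ℕ} (hS : d.betaSet = S)
    (h : #S = d.colLen 0) (i : Fin (d.colLen 0)) :
    d.hookLength i 0 = S.orderEmbOfFin h i.rev := by
  have := orderEmbOfFin_unique h (f := fun i => d.hookLength i.rev 0)
    (fun i => hS ▸ mem_betaSet.mpr ⟨_, i.rev.isLt, rfl⟩)
    (hookLength_zero_strictAnti.comp Fin.rev_strictAnti)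
  simpa using congrFun this i.rev

theorem betaSet_injective : Function.Injective betaSet := by
  intro d e hde
  have hcol : d.colLen 0 = e.colLen 0 := by rw [← card_betaSet, ← card_betaSet, hde]
  have hhook : ∀ i < d.colLen 0, d.hookLength i 0 = e.hookLength i 0 := fun i hi => by
    rw [hookLength_zero_eq_orderEmbOfFin rfl card_betaSet ⟨i, hi⟩,
      hookLength_zero_eq_orderEmbOfFin hde.symm (hde ▸ card_betaSet) ⟨i, hcol ▸ hi⟩,
      orderEmbOfFin_eq_orderEmbOfFin_iff]
    simp [hcol]
  refine YoungDiagram.ext (Finset.ext fun ⟨i, j⟩ => ?_)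
  simp only [mem_cells, mem_iff_lt_rowLen]
  by_cases hi : i < d.colLen 0
  · have := hookLength_zero_add hi
    have := hookLength_zero_add (hcol ▸ hi)
    rw [hhook i hi] at *
    omega
  · have hd := mt mem_iff_lt_colLen.mp hi
    have he := mt mem_iff_lt_colLen.mp (hcol ▸ hi)
    simp only [mem_iff_lt_rowLen] at hd he
    omega

lemma exists_colLen_zero_hookLength_zero_eq {r : ℕ} (s : ℕ → ℕ)
    (hs : ∀ i k, i ≤ k → k < r → s k + (k - i) ≤ s i) (hpos : ∀ i < r, 0 < s i) :
    ∃ d : YoungDiagram, d.colLen 0 = r ∧ ∀ i < r, d.hookLength i 0 = s i := by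
  let d : YoungDiagram :=
    { cells := (range r ×ˢ range (s 0 + 1)).filter fun c => c.2 + r ≤ s c.1 + c.1
      isLowerSet := by
        rintro ⟨i, j⟩ ⟨i', j'⟩ ⟨hi, hj⟩ hc
        simp only [coe_filter, mem_product, mem_range, Set.mem_ofPred_eq] at hc ⊢
        have := hs i' i hi hc.1.1
        have := hs 0 i' (Nat.zero_le i') (lt_of_le_of_lt hi hc.1.1)
        change i' ≤ i at hi
        change j' ≤ j at hj
        omega }
  have hmem : ∀ i j, (i, j) ∈ d ↔ i < r ∧ j + r ≤ s i + i := fun i j => by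
    change (i, j) ∈ (range r ×ˢ range (s 0 + 1)).filter _ ↔ _
    simp only [mem_filter, mem_product, mem_range]
    constructor
    · exact fun h => ⟨h.1.1, h.2⟩
    · intro h
      have := hs 0 i (Nat.zero_le i) h.1
      exact ⟨⟨h.1, by omega⟩, h.2⟩
  have hlow : ∀ i < r, r ≤ s i + i := fun i hi => by
    have := hs i (r - 1) (by omega) (by omega)
    have := hpos (r - 1) (by omega)
    omega
  have hcol : d.colLen 0 = r := eq_of_forall_lt_iff fun i => by
    rw [← mem_iff_lt_colLen, hmem]
    exact ⟨fun h => h.1, fun h => ⟨h, by have := hlow i h; omega⟩⟩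
  refine ⟨d, hcol, fun i hi => ?_⟩
  have hrow : d.rowLen i = s i + i + 1 - r := eq_of_forall_lt_iff fun j => by
    rw [← mem_iff_lt_rowLen, hmem]
    omega
  simp only [hookLength, hrow, hcol]
  have := hlow i hi
  omega

theorem exists_betaSet_eq {S : Finset ℕ} (hS : 0 ∉ S) :
    ∃ d : YoungDiagram, d.betaSet = S := by
  set e := S.orderEmbOfFin rfl
  let s : ℕ → ℕ := fun i => if h : i < #S then e (Fin.rev ⟨i, h⟩) else 0
  have hs : ∀ i (hi : i < #S), s i = e (Fin.rev ⟨i, hi⟩) := fun i hi => dif_pos hi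
  obtain ⟨d, hcol, hhook⟩ := exists_colLen_zero_hookLength_zero_eq (r := #S) s
    (fun i k hik hk => by
      rw [hs i (by omega), hs k hk]
      have hle : (⟨i, by omega⟩ : Fin #S) ≤ ⟨k, hk⟩ := Fin.le_def.mpr hik
      have := Fin.add_sub_le_of_strictMono e.strictMono (Fin.rev_le_rev.mpr hle)
      simp only [Fin.val_rev] at this
      omega)
    (fun i hi => Nat.pos_of_ne_zero fun h0 => hS (by
      rw [← h0, hs i hi]
      exact orderEmbOfFin_mem S rfl _))
  refine ⟨d, Finset.ext fun t => ?_⟩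
  rw [mem_betaSet, hcol, ← Finset.mem_coe, ← range_orderEmbOfFin S rfl, Set.mem_range]
  constructor
  · rintro ⟨i, hi, rfl⟩
    exact ⟨_, by rw [hhook i hi, hs i hi]⟩
  · rintro ⟨x, rfl⟩
    refine ⟨x.rev, x.rev.isLt, ?_⟩
    rw [hhook _ x.rev.isLt, hs _ x.rev.isLt, Fin.eta, Fin.rev_rev]

theorem betaSet_image_setOf_isCore (a b : ℕ) :
    betaSet '' {d | d.IsCore a ∧ d.IsCore b} = {S | IsCoreBetaSet a b S} := by
  ext S
  simp only [Set.mem_image, Set.mem_ofPred_eq, isCore_iff_isSubClosed, IsCoreBetaSet]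
  constructor
  · rintro ⟨d, ⟨ha, hb⟩, rfl⟩
    exact ⟨zero_notMem_betaSet, ha, hb⟩
  · rintro ⟨h0, ha, hb⟩
    obtain ⟨d, rfl⟩ := exists_betaSet_eq h0
    exact ⟨d, ⟨ha, hb⟩, rfl⟩

end YoungDiagram

/-! ### Core `β`-sets and rational Dyck paths -/

namespace RationalCatalan

lemma lt_card_filter_range_iff {m : ℕ} {P : ℕ → Prop} [DecidablePred P]
    (hP : ∀ k, k + 1 < m → P (k + 1) → P k) {k : ℕ} (hk : k < m) :
    P k ↔ k < #{j ∈ range m | P j} := by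
  have hdown : ∀ j k, j ≤ k → k < m → P k → P j := fun j k hjk hk => by
    induction k, hjk using Nat.le_induction with
    | base => exact id
    | succ k _ ih => exact fun h => ih (by omega) (hP k hk h)
  constructor
  · intro h
    have : range (k + 1) ⊆ {j ∈ range m | P j} := fun j hj => by
      rw [mem_range] at hj
      exact mem_filter.mpr ⟨mem_range.mpr (by omega), hdown j k (by omega) hk h⟩
    simpa using card_le_card this
  · intro h
    by_contra hk'
    have : {j ∈ range m | P j} ⊆ range k := fun j hj => by
      rw [mem_filter, mem_range] at hj
      exact mem_range.mpr (by by_contra hkj; exact hk' (hdown k j (by omega) hj.1 hj.2))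
    simpa using (card_le_card this).trans_lt' h

variable {a b : ℕ}

lemma IsSubClosed.sub_mul_mem {S : Finset ℕ} (hS : IsSubClosed a S) {n m : ℕ} (hn : n ∈ S)
    (hm : m * a ≤ n) : n - m * a ∈ S := by
  induction m with
  | zero => simpa
  | succ m ih =>
    rw [Nat.succ_mul] at hm ⊢
    rw [← Nat.sub_sub]
    exact hS _ (ih (by omega)) (by omega)

lemma IsCoreBetaSet.not_dvd {S : Finset ℕ} (hS : IsCoreBetaSet a b S) {n : ℕ} (hn : n ∈ S) :
    ¬ b ∣ n := by
  rintro ⟨m, rfl⟩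
  have := hS.2.2.sub_mul_mem hn (m := m) (by rw [mul_comm])
  rw [mul_comm, Nat.sub_self] at this
  exact hS.1 this

lemma IsCoreBetaSet.lt_of_modEq {S : Finset ℕ} (hS : IsCoreBetaSet a b S) {n x : ℕ}
    (hn : n ∈ S) (hx : x * a ≡ n [MOD b]) : n < x * a := by
  by_contra! h
  exact hS.not_dvd (hS.2.1.sub_mul_mem hn h) ((Nat.modEq_iff_dvd' h).mp hx)

lemma exists_mul_modEq (hab : Nat.Coprime a b) (hb : 0 < b) (n : ℕ) :
    ∃ x < b, x * a ≡ n [MOD b] := by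
  have : NeZero b := ⟨hb.ne'⟩
  let u := ZMod.unitOfCoprime a hab
  refine ⟨((n : ZMod b) * ↑u⁻¹).val, ZMod.val_lt _, ?_⟩
  rw [← ZMod.natCast_eq_natCast_iff, Nat.cast_mul, ZMod.natCast_zmod_val,
    show (a : ZMod b) = u from rfl, mul_assoc, Units.inv_mul, mul_one]

lemma eq_of_mul_modEq (hab : Nat.Coprime a b) {x y : ℕ} (hx : x < b) (hy : y < b)
    (h : x * a ≡ y * a [MOD b]) : x = y :=
  (Nat.ModEq.cancel_right_of_coprime (Nat.coprime_comm.mp hab) h).eq_of_lt_of_lt hx hy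

lemma sub_mul_modEq {n k : ℕ} (h : k * b ≤ n) : n - k * b ≡ n [MOD b] := by
  rw [mul_comm] at h ⊢
  exact Nat.sub_mul_mod h

lemma lt_div_iff_add_one_mul_le (hb : 0 < b) {k n : ℕ} : k < n / b ↔ (k + 1) * b ≤ n :=
  Nat.le_div_iff_mul_le hb

lemma add_one_mul_lt (hab : Nat.Coprime a b) {x k : ℕ} (hx : x < b) (hk : k < x * a / b) :
    (k + 1) * b < x * a := by
  have hb : 0 < b := by omega
  refine ((lt_div_iff_add_one_mul_le hb).mp hk).lt_of_ne fun h => ?_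
  have hx0 : b ∣ x := (Nat.Coprime.dvd_of_dvd_mul_right (Nat.coprime_comm.mp hab) ⟨k + 1, by
    rw [← h, mul_comm]⟩)
  rw [Nat.eq_zero_of_dvd_of_lt hx0 hx] at hk
  simp at hk

def heights (a b : ℕ) (S : Finset ℕ) (x : ℕ) : ℕ :=
  #{k ∈ range (x * a / b) | x * a - (k + 1) * b ∉ S}

lemma heights_mul_le (hb : 0 < b) (S : Finset ℕ) (x : ℕ) : heights a b S x * b ≤ x * a :=
  (Nat.le_div_iff_mul_le hb).mp ((card_filter_le _ _).trans (card_range _).le)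

lemma IsCoreBetaSet.sub_mem_iff (hb : 0 < b) {S : Finset ℕ} (hS : IsCoreBetaSet a b S) {x k : ℕ}
    (hk : k < x * a / b) : x * a - (k + 1) * b ∈ S ↔ heights a b S x ≤ k := by
  rw [← not_lt, heights, ← lt_card_filter_range_iff _ hk, not_not]
  intro k hk h
  contrapose! h
  have hle := (lt_div_iff_add_one_mul_le hb).mp hk
  rw [Nat.succ_mul] at hle
  have := hS.2.2 _ h (by omega)
  rwa [Nat.sub_sub, ← Nat.succ_mul] at this

lemma IsCoreBetaSet.heights_le_heights_add_one (hb : 0 < b) {S : Finset ℕ}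
    (hS : IsCoreBetaSet a b S) (x : ℕ) : heights a b S x ≤ heights a b S (x + 1) := by
  by_contra! h
  set k := heights a b S (x + 1)
  have hkx : k < x * a / b := h.trans_le ((Nat.le_div_iff_mul_le hb).mpr (heights_mul_le hb S x))
  have hkx1 : k < (x + 1) * a / b :=
    hkx.trans_le (Nat.div_le_div_right (Nat.mul_le_mul_right a x.le_succ))
  have hmem := (hS.sub_mem_iff hb hkx1).mpr le_rfl
  have := (lt_div_iff_add_one_mul_le hb).mp hkx
  have := hS.2.1 _ hmem (by rw [Nat.succ_mul]; omega)
  rw [Nat.succ_mul, Nat.sub_right_comm, Nat.add_sub_cancel] at this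
  exact h.not_ge ((hS.sub_mem_iff hb hkx).mp this)

def ratDyckPaths (a b : ℕ) : Set (Fin b → ℕ) := {H | Monotone H ∧ ∀ x, H x * b ≤ x * a}

lemma IsCoreBetaSet.heights_mem_ratDyckPaths (hb : 0 < b) {S : Finset ℕ}
    (hS : IsCoreBetaSet a b S) : (fun x : Fin b => heights a b S x) ∈ ratDyckPaths a b :=
  ⟨(monotone_nat_of_le_succ (hS.heights_le_heights_add_one hb)).comp Fin.val_strictMono.monotone,
    fun x => heights_mul_le hb S x⟩

def ofHeights (a b : ℕ) (H : Fin b → ℕ) : Finset ℕ :=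
  univ.biUnion fun x => (Ico (H x) (x * a / b)).image fun k => x * a - (k + 1) * b

lemma mem_ofHeights {H : Fin b → ℕ} {n : ℕ} :
    n ∈ ofHeights a b H ↔
      ∃ x : Fin b, ∃ k, H x ≤ k ∧ k < x * a / b ∧ x * a - (k + 1) * b = n := by
  simp [ofHeights, and_assoc]

lemma isCoreBetaSet_ofHeights (hab : Nat.Coprime a b) {H : Fin b → ℕ}
    (hH : H ∈ ratDyckPaths a b) :
    IsCoreBetaSet a b (ofHeights a b H) := by
  refine ⟨fun h0 => ?_, fun n hn hna => ?_, fun n hn hnb => ?_⟩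
  · obtain ⟨x, k, -, hk, hx0⟩ := mem_ofHeights.mp h0
    have := add_one_mul_lt hab x.isLt hk
    omega
  · obtain ⟨x, k, hHk, hk, rfl⟩ := mem_ofHeights.mp hn
    have := (lt_div_iff_add_one_mul_le x.pos).mp hk
    have hx : (x - 1 : ℕ) * a = x * a - a := Nat.sub_one_mul _ _
    have hle : (k + 1) * b ≤ (x - 1 : ℕ) * a := by omega
    have hHx : H ⟨x - 1, by omega⟩ ≤ k := (hH.1 (Fin.le_def.mpr (Nat.sub_le _ _))).trans hHk
    exact mem_ofHeights.mpr ⟨⟨x - 1, by omega⟩, k, hHx,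
      (lt_div_iff_add_one_mul_le x.pos).mpr hle, by dsimp only; omega⟩
  · obtain ⟨x, k, hHk, hk, rfl⟩ := mem_ofHeights.mp hn
    have := (lt_div_iff_add_one_mul_le x.pos).mp hk
    have hsucc : (k + 1 + 1) * b = (k + 1) * b + b := Nat.succ_mul _ _
    exact mem_ofHeights.mpr ⟨x, k + 1, by omega, (lt_div_iff_add_one_mul_le x.pos).mpr (by omega),
      by omega⟩

lemma heights_ofHeights (hab : Nat.Coprime a b) {H : Fin b → ℕ} (hH : H ∈ ratDyckPaths a b)
    (x : Fin b) : heights a b (ofHeights a b H) x = H x := by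
  have hb := x.pos
  have hmem : ∀ k < x * a / b, x * a - (k + 1) * b ∈ ofHeights a b H ↔ H x ≤ k := by
    intro k hk
    refine ⟨fun h => ?_, fun h => mem_ofHeights.mpr ⟨x, k, h, hk, rfl⟩⟩
    obtain ⟨y, l, hHl, hl, he⟩ := mem_ofHeights.mp h
    have hlb := (lt_div_iff_add_one_mul_le hb).mp hl
    have hkb := (lt_div_iff_add_one_mul_le hb).mp hk
    obtain rfl : y = x := Fin.ext <| eq_of_mul_modEq hab y.isLt x.isLt <|
      (sub_mul_modEq hlb).symm.trans (he ▸ sub_mul_modEq hkb)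
    have := Nat.eq_of_mul_eq_mul_right hb (by omega : (l + 1) * b = (k + 1) * b)
    omega
  have hHx : H x ≤ x * a / b := (Nat.le_div_iff_mul_le hb).mpr (hH.2 x)
  rw [heights, filter_congr fun k hk => by rw [hmem k (mem_range.mp hk), not_le]]
  convert card_range (H x)
  ext k
  simp only [mem_filter, mem_range]
  omega

lemma IsCoreBetaSet.ofHeights_heights (hab : Nat.Coprime a b) (hb : 0 < b) {S : Finset ℕ}
    (hS : IsCoreBetaSet a b S) : ofHeights a b (fun x : Fin b => heights a b S x) = S := by
  ext n
  rw [mem_ofHeights]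
  constructor
  · rintro ⟨x, k, hHk, hk, rfl⟩
    exact (hS.sub_mem_iff hb hk).mpr hHk
  · intro hn
    obtain ⟨x, hx, hxn⟩ := exists_mul_modEq hab hb n
    have hlt := hS.lt_of_modEq hn hxn
    obtain ⟨m, hm⟩ := (Nat.modEq_iff_dvd' hlt.le).mp hxn.symm
    have hm0 : m ≠ 0 := by rintro rfl; omega
    have hm1 : (m - 1 + 1) * b = x * a - n := by
      rw [Nat.sub_add_cancel (Nat.one_le_iff_ne_zero.mpr hm0), mul_comm, hm]
    have hn' : x * a - (m - 1 + 1) * b = n := by omega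
    have hk : m - 1 < x * a / b := (lt_div_iff_add_one_mul_le hb).mpr (by omega)
    exact ⟨⟨x, hx⟩, m - 1, (hS.sub_mem_iff hb hk).mp (hn' ▸ hn), hk, hn'⟩

theorem ofHeights_image_ratDyckPaths (hab : Nat.Coprime a b) (hb : 0 < b) :
    ofHeights a b '' ratDyckPaths a b = {S | IsCoreBetaSet a b S} := by
  ext S
  refine ⟨?_, fun hS => ⟨_, hS.heights_mem_ratDyckPaths hb, hS.ofHeights_heights hab hb⟩⟩
  rintro ⟨H, hH, rfl⟩
  exact isCoreBetaSet_ofHeights hab hH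

theorem ofHeights_injOn (hab : Nat.Coprime a b) : Set.InjOn (ofHeights a b) (ratDyckPaths a b) :=
  fun H hH H' hH' h => funext fun x => by
    rw [← heights_ofHeights hab hH x, h, heights_ofHeights hab hH' x]

/-! ### The cycle lemma -/

section Ballot

open Fin.NatCast
open scoped Pointwise

variable {n : ℕ} [NeZero n]

def prefixCount (A : Finset (Fin n)) (p : ℕ) : ℕ :=
  #((range p).filter fun q : ℕ => (q : Fin n) ∈ A)

/-- Read `A` as a periodic word in which each element of `A` is a step `+(n - #A)` and each other
residue a step `-#A`; this is its height after `p` steps. -/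
def discrepancy (A : Finset (Fin n)) (p : ℕ) : ℤ := n * prefixCount A p - #A * p

def IsBallot (A : Finset (Fin n)) : Prop := ∀ p, 0 ≤ discrepancy A p

variable (A : Finset (Fin n))

lemma prefixCount_add_one (p : ℕ) :
    prefixCount A (p + 1) = prefixCount A p + if (p : Fin n) ∈ A then 1 else 0 := by
  rw [prefixCount, prefixCount, range_add_one, filter_insert]
  split_ifs with h
  · rw [card_insert_of_notMem (by simp)]
  · rfl

lemma prefixCount_mono : Monotone (prefixCount A) := fun _ _ h =>
  card_le_card (filter_subset_filter _ (range_subset_range.mpr h))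

lemma prefixCount_eq_card {p : ℕ} (hp : p ≤ n) :
    prefixCount A p = #(A.filter fun i : Fin n => (i : ℕ) < p) := by
  refine card_nbij' (fun q => (q : Fin n)) Fin.val (fun q hq => ?_) (fun i hi => ?_)
    (fun q hq => ?_) (fun i _ => Fin.cast_val_eq_self i)
  · simp only [coe_filter, mem_range, Set.mem_ofPred_eq] at hq ⊢
    exact ⟨hq.2, by rw [Fin.val_natCast, Nat.mod_eq_of_lt (by omega)]; exact hq.1⟩
  · simp only [coe_filter, mem_range, Set.mem_ofPred_eq] at hi ⊢
    exact ⟨hi.2, by rw [Fin.cast_val_eq_self]; exact hi.1⟩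
  · simp only [coe_filter, mem_range, Set.mem_ofPred_eq] at hq
    rw [Fin.val_natCast, Nat.mod_eq_of_lt (by omega)]

lemma prefixCount_add_period (p : ℕ) : prefixCount A (p + n) = prefixCount A p + #A := by
  induction p with
  | zero =>
    rw [zero_add, prefixCount_eq_card A le_rfl, filter_true_of_mem fun i _ => i.isLt]
    simp [prefixCount]
  | succ p ih =>
    rw [add_right_comm, prefixCount_add_one, ih, prefixCount_add_one, Nat.cast_add,
      Fin.natCast_self, add_zero]
    ring

lemma discrepancy_periodic : Function.Periodic (discrepancy A) n := fun p => by
  simp only [discrepancy, prefixCount_add_period]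
  push_cast
  ring

lemma prefixCount_neg_vadd (k : Fin n) (j : ℕ) :
    prefixCount (-k +ᵥ A) j + prefixCount A k = prefixCount A (k + j) := by
  induction j with
  | zero => simp [prefixCount]
  | succ j ih =>
    simp only [← add_assoc, prefixCount_add_one, ← ih, mem_neg_vadd_finset_iff, vadd_eq_add,
      Nat.cast_add, Fin.cast_val_eq_self]
    ring

lemma discrepancy_neg_vadd (k : Fin n) (j : ℕ) :
    discrepancy (-k +ᵥ A) j = discrepancy A (k + j) - discrepancy A k := by
  simp only [discrepancy, card_vadd_finset, ← prefixCount_neg_vadd A k j]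
  push_cast
  ring

lemma eq_of_discrepancy_eq (hA : Nat.Coprime n #A) {p q : ℕ} (hpq : p ≤ q) (hqp : q < p + n)
    (h : discrepancy A p = discrepancy A q) : p = q := by
  have hmono := prefixCount_mono A hpq
  have hdvd : n ∣ #A * (q - p) := ⟨prefixCount A q - prefixCount A p, by
    simp only [discrepancy] at h
    zify [hpq, hmono]
    linarith⟩
  have := Nat.eq_zero_of_dvd_of_lt (hA.dvd_of_dvd_mul_left hdvd) (by omega)
  omega

lemma isBallot_neg_vadd_iff (k : Fin n) :
    IsBallot (-k +ᵥ A) ↔ ∀ p, discrepancy A k ≤ discrepancy A p := by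
  simp only [IsBallot, discrepancy_neg_vadd, sub_nonneg]
  refine ⟨fun h p => ?_, fun h j => h _⟩
  rw [← (discrepancy_periodic A).map_mod_nat p]
  have hp : p % n < n := Nat.mod_lt _ (NeZero.pos n)
  by_cases hk : (k : ℕ) ≤ p % n
  · simpa [Nat.add_sub_cancel' hk] using h (p % n - k)
  · have := h (p % n + n - k)
    rwa [show (k : ℕ) + (p % n + n - k) = p % n + n by omega, discrepancy_periodic] at this

/-- The cycle lemma of Dvoretzky and Motzkin. -/
theorem existsUnique_isBallot_neg_vadd (hA : Nat.Coprime n #A) :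
    ∃! k : Fin n, IsBallot (-k +ᵥ A) := by
  obtain ⟨m, -, hm⟩ := exists_min_image univ (fun k : Fin n => discrepancy A k) univ_nonempty
  have hmin : ∀ p, discrepancy A m ≤ discrepancy A p := fun p => by
    rw [← (discrepancy_periodic A).map_mod_nat p]
    exact hm ⟨p % n, Nat.mod_lt _ (NeZero.pos n)⟩ (mem_univ _)
  refine ⟨m, (isBallot_neg_vadd_iff A m).mpr hmin, fun k hk => Fin.ext ?_⟩
  have h := le_antisymm ((isBallot_neg_vadd_iff A k).mp hk m) (hmin k)
  rcases le_total (k : ℕ) m with hkm | hmk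
  · exact eq_of_discrepancy_eq A hA hkm (by omega) h
  · exact (eq_of_discrepancy_eq A hA hmk (by omega) h.symm).symm

theorem mul_ncard_setOf_isBallot {m : ℕ} (hm : Nat.Coprime n m) :
    n * {A : Finset (Fin n) | #A = m ∧ IsBallot A}.ncard = n.choose m := by
  let rotate :
      {A : Finset (Fin n) | #A = m ∧ IsBallot A} × Fin n → {A : Finset (Fin n) // #A = m} :=
    fun Bk => ⟨Bk.2 +ᵥ Bk.1.1, by rw [card_vadd_finset]; exact Bk.1.2.1⟩
  have hrotate : Function.Bijective rotate := by
    refine ⟨fun ⟨⟨B, hB⟩, k⟩ ⟨⟨B', hB'⟩, k'⟩ h => ?_, fun ⟨A, hA⟩ => ?_⟩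
    · have h : k +ᵥ B = k' +ᵥ B' := congrArg Subtype.val h
      have hcard : #(k +ᵥ B) = m := by rw [card_vadd_finset]; exact hB.1
      obtain ⟨_, -, huniq⟩ := existsUnique_isBallot_neg_vadd (k +ᵥ B) (hcard ▸ hm)
      obtain rfl : k = k' :=
        (huniq k (by simpa only [neg_vadd_vadd] using hB.2)).trans
          (huniq k' (by simpa only [h, neg_vadd_vadd] using hB'.2)).symm
      obtain rfl : B = B' := by simpa using h
      rfl
    · obtain ⟨k, hk, -⟩ := existsUnique_isBallot_neg_vadd A (hA ▸ hm)
      exact ⟨⟨⟨-k +ᵥ A, by rw [card_vadd_finset]; exact hA, hk⟩, k⟩,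
        Subtype.ext (vadd_neg_vadd k A)⟩
  have := Nat.card_congr (Equiv.ofBijective rotate hrotate)
  rwa [Nat.card_prod, Nat.card_eq_fintype_card (α := {A : Finset (Fin n) // #A = m}),
    Fintype.card_finset_len, Fintype.card_fin, Nat.card_coe_set_eq, Nat.card_fin, mul_comm] at this

lemma prefixCount_eq_card_orderEmbOfFin {m : ℕ} (h : #A = m) {p : ℕ} (hp : p ≤ n) :
    prefixCount A p = #(univ.filter fun x : Fin m => (A.orderEmbOfFin h x : ℕ) < p) := by
  rw [prefixCount_eq_card A hp, ← card_map (A.orderEmbOfFin h).toEmbedding]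
  congr 1
  ext i
  simp only [mem_filter, mem_map, mem_univ, true_and, RelEmbedding.coe_toEmbedding]
  constructor
  · rintro ⟨hi, hip⟩
    obtain ⟨x, rfl⟩ : i ∈ Set.range (A.orderEmbOfFin h) := by
      rw [range_orderEmbOfFin]
      exact hi
    exact ⟨x, hip, rfl⟩
  · rintro ⟨x, hx, rfl⟩
    exact ⟨orderEmbOfFin_mem A h x, hx⟩

lemma prefixCount_orderEmbOfFin {m : ℕ} (h : #A = m) (x : Fin m) :
    prefixCount A (A.orderEmbOfFin h x) = x := by
  rw [prefixCount_eq_card_orderEmbOfFin A h (A.orderEmbOfFin h x).isLt.le]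
  simp [filter_gt_eq_Iio]

theorem isBallot_iff {m : ℕ} (h : #A = m) :
    IsBallot A ↔ ∀ x : Fin m, m * (A.orderEmbOfFin h x : ℕ) ≤ n * x := by
  set f := A.orderEmbOfFin h
  constructor
  · intro hA x
    have := hA (f x)
    rw [discrepancy, prefixCount_orderEmbOfFin, h, sub_nonneg] at this
    exact_mod_cast this
  · intro hA p
    rw [← (discrepancy_periodic A).map_mod_nat p, discrepancy, h, sub_nonneg]
    have hq : p % n ≤ n := (Nat.mod_lt _ (NeZero.pos n)).le
    set q := p % n
    set u := prefixCount A q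
    suffices m * q ≤ n * u by exact_mod_cast this
    by_cases hu : u < m
    · have hqf : q ≤ f ⟨u, hu⟩ := by
        by_contra! hlt
        have hsub : Iic (⟨u, hu⟩ : Fin m) ⊆ univ.filter fun x : Fin m => (f x : ℕ) < q :=
          fun x hx => mem_filter.mpr
            ⟨mem_univ x, lt_of_le_of_lt (f.monotone (mem_Iic.mp hx)) hlt⟩
        have := card_le_card hsub
        rw [Fin.card_Iic, ← prefixCount_eq_card_orderEmbOfFin A h hq] at this
        exact Nat.not_succ_le_self u this
      exact (Nat.mul_le_mul_left m hqf).trans (hA ⟨u, hu⟩)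
    · calc m * q ≤ m * n := Nat.mul_le_mul_left m hq
        _ ≤ n * u := by rw [mul_comm]; exact Nat.mul_le_mul_left n (not_lt.mp hu)

end Ballot

/-! ### Rational Dyck paths as ballot subsets -/

section Paths

open Fin.NatCast

variable {a b : ℕ} [NeZero (a + b)]

variable (a) in
/-- The lattice path of `H`, as the set of times at which it takes a north step. -/
def northSteps (H : Fin b → ℕ) : Finset (Fin (a + b)) :=
  univ.image fun x => ((x + H x : ℕ) : Fin (a + b))

omit [NeZero (a + b)] in
lemma add_lt_of_mem_ratDyckPaths {H : Fin b → ℕ} (hH : H ∈ ratDyckPaths a b) (x : Fin b) :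
    x + H x < a + b := by
  have : H x * b ≤ a * b :=
    (hH.2 x).trans (by rw [mul_comm]; exact Nat.mul_le_mul_left a x.isLt.le)
  have := Nat.le_of_mul_le_mul_right this x.pos
  omega

lemma val_northStep {H : Fin b → ℕ} (hH : H ∈ ratDyckPaths a b) (x : Fin b) :
    (((x + H x : ℕ) : Fin (a + b)) : ℕ) = x + H x := by
  rw [Fin.val_natCast, Nat.mod_eq_of_lt (add_lt_of_mem_ratDyckPaths hH x)]

lemma northStep_strictMono {H : Fin b → ℕ} (hH : H ∈ ratDyckPaths a b) :
    StrictMono fun x : Fin b => ((x + H x : ℕ) : Fin (a + b)) := fun x y hxy => by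
  rw [Fin.lt_def, val_northStep hH, val_northStep hH]
  have := hH.1 hxy.le
  rw [Fin.lt_def] at hxy
  omega

lemma card_northSteps {H : Fin b → ℕ} (hH : H ∈ ratDyckPaths a b) :
    #(northSteps a H) = b := by
  rw [northSteps, card_image_of_injective _ (northStep_strictMono hH).injective, card_univ,
    Fintype.card_fin]

lemma orderEmbOfFin_northSteps {H : Fin b → ℕ} (hH : H ∈ ratDyckPaths a b)
    {S : Finset (Fin (a + b))} (hS : northSteps a H = S) (h : #S = b) (x : Fin b) :
    (S.orderEmbOfFin h x : ℕ) = x + H x := by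
  rw [← orderEmbOfFin_unique h (fun x => hS ▸ mem_image_of_mem _ (mem_univ x))
    (northStep_strictMono hH), val_northStep hH]

lemma isBallot_northSteps {H : Fin b → ℕ} (hH : H ∈ ratDyckPaths a b) :
    IsBallot (northSteps a H) := by
  rw [isBallot_iff _ (card_northSteps hH)]
  intro x
  rw [orderEmbOfFin_northSteps hH rfl]
  have := hH.2 x
  nlinarith

theorem northSteps_injOn : Set.InjOn (northSteps a) (ratDyckPaths a b) := fun H hH H' hH' h =>
  funext fun x => by
    have := orderEmbOfFin_northSteps hH rfl (card_northSteps hH) x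
    rw [orderEmbOfFin_northSteps hH' h.symm (card_northSteps hH) x] at this
    omega

theorem northSteps_image_ratDyckPaths :
    northSteps a '' ratDyckPaths a b = {A : Finset (Fin (a + b)) | #A = b ∧ IsBallot A} := by
  ext A
  refine ⟨?_, fun ⟨hA, hballot⟩ => ?_⟩
  · rintro ⟨H, hH, rfl⟩
    exact ⟨card_northSteps hH, isBallot_northSteps hH⟩
  set f := A.orderEmbOfFin hA
  have hf : StrictMono fun x => (f x : ℕ) := Fin.val_strictMono.comp f.strictMono
  have hle : ∀ x : Fin b, (x : ℕ) ≤ f x := fun x => by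
    have := Fin.add_sub_le_of_strictMono hf (Fin.le_def.mpr (Nat.zero_le x) : ⟨0, x.pos⟩ ≤ x)
    simp only [Nat.sub_zero] at this
    omega
  have hH : (fun x : Fin b => (f x : ℕ) - x) ∈ ratDyckPaths a b := by
    refine ⟨fun x y hxy => ?_, fun x => ?_⟩
    · have := Fin.add_sub_le_of_strictMono hf hxy
      have := hle x
      dsimp only
      omega
    · have := (isBallot_iff A hA).mp hballot x
      have := hle x
      zify [hle x] at this ⊢
      nlinarith
  refine ⟨_, hH, ?_⟩
  rw [northSteps, ← image_orderEmbOfFin_univ A hA]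
  refine image_congr fun x _ => Fin.ext ?_
  rw [val_northStep hH, Nat.add_sub_cancel' (hle x)]

end Paths

end RationalCatalan

theorem stmt_0_general (a b : ℕ) (hb : 0 < b) (hab : Nat.Coprime a b) :
    (a + b) * {d : YoungDiagram | d.IsCore a ∧ d.IsCore b}.ncard
      = Nat.choose (a + b) b := by
  have : NeZero (a + b) := ⟨by omega⟩
  rw [← Set.ncard_image_of_injective _ YoungDiagram.betaSet_injective,
    YoungDiagram.betaSet_image_setOf_isCore, ← ofHeights_image_ratDyckPaths hab hb,
    (ofHeights_injOn hab).ncard_image, ← (northSteps_injOn (a := a) (b := b)).ncard_image,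
    northSteps_image_ratDyckPaths]
  exact mul_ncard_setOf_isBallot (Nat.coprime_add_self_left.mpr hab)

theorem stmt_0 (a b : ℕ) (ha : 0 < a) (hb : 0 < b) (hab : Nat.Coprime a b) :
    (a + b) * {d : YoungDiagram | d.IsCore a ∧ d.IsCore b}.ncard
      = Nat.choose (a + b) b :=
  stmt_0_general a b hb hab
end

section
/- Let X be a random variable uniformly distributed on {0, 1, ..., n-1}. Then the cumulant generating function of X satisfies: for r ≥ 1, the r-th cumulant of X equals (B_r / r) * (n^r - 1), where B_r is the r-th Bernoulli number. -/
/-!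
Let `E t = (eᵗ - 1) / t`. The moment generating function of the uniform law on
`{0, …, n-1}` is `(1/n) ∑ eⁱᵗ = E (n t) / E t`, so its cumulant generating function is
`g (n t) - g t` with `g = log ∘ E`, and `κ_r = (n^r - 1) g⁽ʳ⁾(0)`.
From `g' E = E'` and `(t E)' = eᵗ` we get `(t g' + 1) E = eᵗ`; comparing Taylor
coefficients at `0` (Leibniz rule, `E⁽ʲ⁾(0) = 1/(j+1)`) gives exactly the recursion defining
`bernoulli'`, so `(t g' + 1)⁽ʳ⁾(0) = r g⁽ʳ⁾(0)` equals `B_r` for `r ≥ 1`.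
-/

open ProbabilityTheory

/-- The `r`-th cumulant of a real random variable `X` on `(Ω, μ)`, defined as the
`r`-th coefficient (times `r!`) of the Taylor expansion of the cumulant generating
function `t ↦ log E[e^{tX}]` at `0`. -/
noncomputable def nthCumulant {Ω : Type*} [MeasurableSpace Ω]
    (r : ℕ) (X : Ω → ℝ) (μ : MeasureTheory.Measure Ω) : ℝ :=
  iteratedDeriv r (fun t => cgf X μ t) 0

open Finset FormalMultilinearSeries
open scoped Nat ContDiff

theorem eq_bernoulli'_of_sum_choose_div {K : Type*} [Field K] [CharZero K] {a : ℕ → K}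
    (h : ∀ n : ℕ, ∑ k ∈ range (n + 1), (n.choose k : K) / (n - k + 1) * a k = 1) (n : ℕ) :
    a n = bernoulli' n := by
  induction n using Nat.strong_induction_on with
  | _ n ih =>
    have hn := h n
    rw [sum_range_succ, sum_congr rfl fun k hk => by rw [ih k (mem_range.mp hk)]] at hn
    simp only [Nat.choose_self, Nat.cast_one, sub_self, zero_add, div_one, one_mul] at hn
    rw [bernoulli'_def]
    push_cast
    linear_combination hn

theorem HasFPowerSeriesAt.iteratedDeriv_eq_factorial_mul {𝕜 : Type*} [NontriviallyNormedField 𝕜]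
    [CompleteSpace 𝕜] [CharZero 𝕜] {f : 𝕜 → 𝕜} {c : ℕ → 𝕜} {x : 𝕜}
    (h : HasFPowerSeriesAt f (ofScalars 𝕜 c) x) (n : ℕ) :
    iteratedDeriv n f x = n ! * c n := by
  have hc := congrFun (ofScalars_series_injective 𝕜 𝕜
    (h.eq_formalMultilinearSeries h.analyticAt.hasFPowerSeriesAt)) n
  rw [hc, mul_div_cancel₀ _ (Nat.cast_ne_zero.mpr n.factorial_ne_zero)]

theorem iteratedDeriv_id_mul_deriv_zero {𝕜 : Type*} [NontriviallyNormedField 𝕜] {f : 𝕜 → 𝕜}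
    (hf : ContDiff 𝕜 ∞ f) (m : ℕ) :
    iteratedDeriv (m + 1) (fun t => t * deriv f t) 0 = (m + 1) * iteratedDeriv (m + 1) f 0 := by
  rw [iteratedDeriv_fun_mul contDiffAt_fun_id
      ((contDiff_infty_iff_deriv.mp hf).2.contDiffAt.of_le (mod_cast le_top)),
    sum_eq_single 1 (fun k _ hk => by simp [iteratedDeriv_fun_id_zero, hk]) (by simp)]
  simp [iteratedDeriv_fun_id_zero, iteratedDeriv_succ']

noncomputable def expSubOneDivCoeff (k : ℕ) : ℝ := ((k + 1)! : ℝ)⁻¹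

theorem radius_ofScalars_expSubOneDivCoeff : (ofScalars ℝ expSubOneDivCoeff).radius = ⊤ := by
  refine radius_eq_top_of_summable_norm _ fun r => ?_
  refine (Real.summable_pow_div_factorial r).of_nonneg_of_le (fun k => by positivity) fun k => ?_
  rw [ofScalars_norm, expSubOneDivCoeff, norm_inv, Real.norm_natCast, inv_mul_eq_div]
  gcongr
  exact k.le_succ

/-- `(eᵗ - 1) / t`, defined by its power series so that it is `1` (not `0`) at `t = 0`. -/
noncomputable def expSubOneDiv : ℝ → ℝ := ofScalarsSum expSubOneDivCoeff

theorem hasFPowerSeriesOnBall_expSubOneDiv :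
    HasFPowerSeriesOnBall expSubOneDiv (ofScalars ℝ expSubOneDivCoeff) 0 ⊤ := by
  have h := (ofScalars ℝ expSubOneDivCoeff).hasFPowerSeriesOnBall
    (by simp [radius_ofScalars_expSubOneDivCoeff])
  rwa [radius_ofScalars_expSubOneDivCoeff] at h

theorem contDiff_expSubOneDiv : ContDiff ℝ ∞ expSubOneDiv :=
  AnalyticOnNhd.contDiff (by simpa using hasFPowerSeriesOnBall_expSubOneDiv.analyticOnNhd)

theorem iteratedDeriv_expSubOneDiv_zero (m : ℕ) :
    iteratedDeriv m expSubOneDiv 0 = ((m : ℝ) + 1)⁻¹ := by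
  rw [hasFPowerSeriesOnBall_expSubOneDiv.hasFPowerSeriesAt.iteratedDeriv_eq_factorial_mul,
    expSubOneDivCoeff, Nat.factorial_succ]
  push_cast
  field_simp

theorem mul_expSubOneDiv (t : ℝ) : t * expSubOneDiv t = Real.exp t - 1 := by
  have hE : HasSum (fun k => t * (expSubOneDivCoeff k * t ^ k)) (t * expSubOneDiv t) := by
    have := hasFPowerSeriesOnBall_expSubOneDiv.hasSum (y := t) (by simp)
    simp only [zero_add, ofScalars_apply_eq, smul_eq_mul] at this
    exact this.mul_left t
  have hexp : HasSum (fun k : ℕ => t ^ (k + 1) / (k + 1)!) (Real.exp t - 1) := by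
    rw [Real.exp_eq_exp_ℝ]
    simpa using (hasSum_nat_add_iff' 1).mpr (NormedSpace.expSeries_div_hasSum_exp t)
  refine hE.unique (hexp.congr_fun fun k => ?_)
  rw [expSubOneDivCoeff, pow_succ]
  ring

theorem expSubOneDiv_zero : expSubOneDiv 0 = 1 := by
  simp [expSubOneDiv, expSubOneDivCoeff]

theorem expSubOneDiv_pos (t : ℝ) : 0 < expSubOneDiv t := by
  rcases lt_trichotomy t 0 with ht | rfl | ht
  · nlinarith [mul_expSubOneDiv t, Real.exp_lt_one_iff.mpr ht]
  · simp [expSubOneDiv_zero]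
  · nlinarith [mul_expSubOneDiv t, Real.one_lt_exp_iff.mpr ht]

noncomputable def logExpSubOneDiv (t : ℝ) : ℝ := Real.log (expSubOneDiv t)

theorem contDiff_logExpSubOneDiv : ContDiff ℝ ∞ logExpSubOneDiv :=
  contDiff_expSubOneDiv.log fun t => (expSubOneDiv_pos t).ne'

/-- `t / (1 - e⁻ᵗ)`, the exponential generating function of `bernoulli'`. -/
noncomputable def bernoulli'Fun (t : ℝ) : ℝ := t * deriv logExpSubOneDiv t + 1

theorem contDiff_deriv_logExpSubOneDiv : ContDiff ℝ ∞ (deriv logExpSubOneDiv) :=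
  (contDiff_infty_iff_deriv.mp contDiff_logExpSubOneDiv).2

theorem contDiffAt_id_mul_deriv_logExpSubOneDiv {n : ℕ} {x : ℝ} :
    ContDiffAt ℝ n (fun t => t * deriv logExpSubOneDiv t) x :=
  contDiffAt_fun_id.mul (contDiff_deriv_logExpSubOneDiv.contDiffAt.of_le (mod_cast le_top))

theorem contDiffAt_bernoulli'Fun {n : ℕ} {x : ℝ} : ContDiffAt ℝ n bernoulli'Fun x :=
  contDiffAt_id_mul_deriv_logExpSubOneDiv.add contDiffAt_const

theorem bernoulli'Fun_mul_expSubOneDiv (t : ℝ) :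
    bernoulli'Fun t * expSubOneDiv t = Real.exp t := by
  have hE : HasDerivAt expSubOneDiv (deriv expSubOneDiv t) t :=
    (contDiff_expSubOneDiv.differentiable (by simp) t).hasDerivAt
  have hlog : deriv logExpSubOneDiv t = deriv expSubOneDiv t / expSubOneDiv t :=
    (hE.log (expSubOneDiv_pos t).ne').deriv
  have hprod : HasDerivAt (fun s => s * expSubOneDiv s)
      (1 * expSubOneDiv t + t * deriv expSubOneDiv t) t :=
    (hasDerivAt_id' t).mul hE
  simp only [mul_expSubOneDiv] at hprod
  rw [bernoulli'Fun, hlog, ← hprod.unique ((Real.hasDerivAt_exp t).sub_const 1)]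
  field_simp [(expSubOneDiv_pos t).ne']
  ring

theorem iteratedDeriv_bernoulli'Fun_zero (n : ℕ) :
    iteratedDeriv n bernoulli'Fun 0 = bernoulli' n := by
  refine eq_bernoulli'_of_sum_choose_div (a := fun n => iteratedDeriv n bernoulli'Fun 0)
    (fun n => ?_) n
  have hleibniz := iteratedDeriv_fun_mul (n := n) (x := (0 : ℝ)) contDiffAt_bernoulli'Fun
    (contDiff_expSubOneDiv.contDiffAt.of_le (mod_cast le_top))
  rw [funext bernoulli'Fun_mul_expSubOneDiv, iteratedDeriv_eq_iterate, Real.iter_deriv_exp,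
    Real.exp_zero] at hleibniz
  refine (sum_congr rfl fun k hk => ?_).trans hleibniz.symm
  rw [iteratedDeriv_expSubOneDiv_zero, Nat.cast_sub (mem_range_succ_iff.mp hk)]
  ring

theorem iteratedDeriv_logExpSubOneDiv_zero {r : ℕ} (hr : 1 ≤ r) :
    iteratedDeriv r logExpSubOneDiv 0 = bernoulli' r / r := by
  obtain ⟨m, rfl⟩ := Nat.exists_eq_add_of_le' hr
  have h := iteratedDeriv_bernoulli'Fun_zero (m + 1)
  unfold bernoulli'Fun at h
  rw [iteratedDeriv_fun_add contDiffAt_id_mul_deriv_logExpSubOneDiv contDiffAt_const,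
    iteratedDeriv_id_mul_deriv_zero contDiff_logExpSubOneDiv, iteratedDeriv_const,
    if_neg m.succ_ne_zero, add_zero] at h
  push_cast
  rw [← h, mul_div_cancel_left₀ _ (by positivity)]

theorem sum_exp_mul_mul_expSubOneDiv (n : ℕ) (t : ℝ) :
    (∑ i ∈ range n, Real.exp (t * i)) * expSubOneDiv t = n * expSubOneDiv (n * t) := by
  rcases eq_or_ne t 0 with rfl | ht
  · simp [expSubOneDiv_zero]
  refine mul_left_cancel₀ ht ?_
  calc t * ((∑ i ∈ range n, Real.exp (t * i)) * expSubOneDiv t)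
      = (∑ i ∈ range n, Real.exp t ^ i) * (t * expSubOneDiv t) := by
        simp_rw [← Real.exp_nat_mul, mul_comm t]; ring
    _ = Real.exp (n * t) - 1 := by rw [mul_expSubOneDiv, geom_sum_mul, ← Real.exp_nat_mul]
    _ = t * (n * expSubOneDiv (n * t)) := by rw [← mul_expSubOneDiv]; ring

theorem cgf_uniformOfFinset_fin {n : ℕ} (hs : (univ : Finset (Fin n)).Nonempty) (t : ℝ) :
    cgf (fun i : Fin n => (i : ℝ)) (PMF.uniformOfFinset univ hs).toMeasure t
      = logExpSubOneDiv (n * t) - logExpSubOneDiv t := by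
  have hn : (n : ℝ) ≠ 0 := Nat.cast_ne_zero.mpr (Fin.pos hs.choose).ne'
  have hmgf : mgf (fun i : Fin n => (i : ℝ)) (PMF.uniformOfFinset univ hs).toMeasure t
      = expSubOneDiv (n * t) / expSubOneDiv t := by
    rw [mgf, PMF.integral_eq_sum]
    simp only [PMF.uniformOfFinset_apply, mem_univ, if_true, card_univ, Fintype.card_fin,
      smul_eq_mul]
    rw [← Finset.mul_sum, Fin.sum_univ_eq_sum_range (fun i => Real.exp (t * i)) n,
      eq_div_iff (expSubOneDiv_pos t).ne', mul_assoc, sum_exp_mul_mul_expSubOneDiv]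
    simp [hn]
  rw [cgf, hmgf, Real.log_div (expSubOneDiv_pos _).ne' (expSubOneDiv_pos _).ne']
  rfl

theorem stmt_4 (n : ℕ) (hn : 0 < n) (r : ℕ) (hr : 1 ≤ r) :
    nthCumulant r (fun i : Fin n => (i : ℝ))
        (PMF.uniformOfFinset Finset.univ ⟨⟨0, hn⟩, Finset.mem_univ _⟩).toMeasure
      = ((bernoulli' r : ℝ) / r) * ((n : ℝ) ^ r - 1) := by
  have hg : ContDiff ℝ r logExpSubOneDiv := contDiff_logExpSubOneDiv.of_le (mod_cast le_top)
  have hgn : ContDiff ℝ r fun t => logExpSubOneDiv (n * t) :=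
    hg.comp (contDiff_const.mul contDiff_id)
  rw [nthCumulant, funext (cgf_uniformOfFinset_fin (n := n) ⟨⟨0, hn⟩, mem_univ _⟩)]
  beta_reduce
  rw [iteratedDeriv_fun_sub hgn.contDiffAt hg.contDiffAt,
    congrFun (iteratedDeriv_comp_const_mul hg _) 0, mul_zero,
    iteratedDeriv_logExpSubOneDiv_zero hr]
  ring
end

section
/- Let a_1,...,a_k and b_1,...,b_k be positive integers such that the rational function ∏_{i=1}^k [a_i]_q / [b_i]_q is a polynomial in q with nonnegative coefficients, and let X be the random variable whose distribution is proportional to the coefficients of this polynomial. Then for r ≥ 1, the r-th cumulant of X equals (B_r / r) * Σ_{i=1}^k (a_i^r - b_i^r). -/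
open Polynomial

/-- The `q`-integer `[n]_q = 1 + q + ⋯ + q^{n-1}` as a polynomial over `ℚ`. -/
noncomputable def qInt (n : ℕ) : Polynomial ℚ :=
  ∑ j ∈ Finset.range n, Polynomial.X ^ j

/-- The cumulant generating function of the random variable whose distribution is
proportional to the coefficients of the polynomial `F`:
`t ↦ log (Σ_j F_j e^{t j}) − log (Σ_j F_j)`. -/
noncomputable def polyCGF (F : Polynomial ℚ) (t : ℝ) : ℝ :=
  Real.log (∑ j ∈ Finset.range (F.natDegree + 1), (F.coeff j : ℝ) * Real.exp (t * j))
    - Real.log ((F.eval 1 : ℚ) : ℝ)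

/-- The `r`-th cumulant of the distribution given by the coefficients of `F`. -/
noncomputable def polyCumulant (r : ℕ) (F : Polynomial ℚ) : ℝ :=
  iteratedDeriv r (polyCGF F) 0

/-!
Put `q = e^t` and let `G(t) = (e^t - 1)/t`, the moment generating function of the uniform law
on `[0, 1]`. Since `[n]_q (q - 1) = q^n - 1`, we have `[n]_q G(t) = n G(nt)`, so the hypothesis
gives `F(e^t) = F(1) ∏ G(a_i t) / G(b_i t)`. Hence the cumulant generating function of `X` is
`Σ L(a_i t) - L(b_i t)` with `L = log G`, and `κ_r = L^{(r)}(0) Σ (a_i^r - b_i^r)`.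

It remains to see `r L^{(r)}(0) = B_r`. Differentiating `t G(t) = e^t - 1` shows
`1 + t L'(t) = M(t) := e^t / G(t) = t e^t / (e^t - 1)`, and Leibniz's rule applied to
`M(t) e^t = M(t) + t e^t` gives `Σ_{j<n} C(n, j) M^{(j)}(0) = n`, the recursion defining the
Bernoulli numbers with `B_1 = +1/2` (Mathlib's `bernoulli'`).
-/

open Finset Real

theorem analyticAt_dslope {𝕜 E : Type*} [NontriviallyNormedField 𝕜] [NormedAddCommGroup E]
    [NormedSpace 𝕜 E] {f : 𝕜 → E} {a b : 𝕜} (ha : AnalyticAt 𝕜 f a) (hb : AnalyticAt 𝕜 f b) :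
    AnalyticAt 𝕜 (dslope f a) b := by
  rcases eq_or_ne b a with rfl | hba
  · obtain ⟨p, hp⟩ := ha
    exact hp.has_fpower_series_dslope_fslope.analyticAt
  · have hslope : AnalyticAt 𝕜 (fun x => (x - a)⁻¹ • (f x - f a)) b :=
      ((analyticAt_id.sub analyticAt_const).inv (sub_ne_zero.2 hba)).smul
        (hb.sub analyticAt_const)
    exact hslope.congr (dslope_eventuallyEq_slope_of_ne f hba).symm

theorem iteratedDeriv_id_mul_zero {𝕜 : Type*} [NontriviallyNormedField 𝕜] {f : 𝕜 → 𝕜} {n : ℕ}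
    (hf : ContDiffAt 𝕜 n f 0) :
    iteratedDeriv n (fun t => t * f t) 0 = n * iteratedDeriv (n - 1) f 0 := by
  rw [iteratedDeriv_fun_mul (f := fun t => t) contDiffAt_id hf, sum_eq_single 1]
  · simp [iteratedDeriv_fun_id_zero]
  · intro i _ hi
    simp [iteratedDeriv_fun_id_zero, hi]
  · intro h
    simp_all

theorem eq_bernoulli'_of_sum_choose_mul {K : Type*} [Field K] [CharZero K] {u : ℕ → K}
    (h : ∀ n, ∑ i ∈ range n, (n.choose i : K) * u i = n) (n : ℕ) : u n = bernoulli' n := by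
  induction n using Nat.strong_induction_on with
  | _ n ih =>
    have hu := h (n + 1)
    have hB : ∑ i ∈ range (n + 1), ((n + 1).choose i : K) * (bernoulli' i : K) = n + 1 := by
      exact_mod_cast sum_bernoulli' (n + 1)
    rw [sum_range_succ, sum_congr rfl fun i hi => by rw [ih i (mem_range.1 hi)]] at hu
    rw [sum_range_succ] at hB
    have hchoose : ((n + 1).choose n : K) ≠ 0 := by
      rw [Nat.choose_succ_self_right]; exact Nat.cast_ne_zero.2 n.succ_ne_zero
    push_cast at hu
    exact mul_left_cancel₀ hchoose (by linear_combination hu - hB)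

-- `(e^t - 1) / t`, extended continuously by `1` at `t = 0`.
noncomputable def expSlope : ℝ → ℝ := dslope exp 0

theorem mul_expSlope (t : ℝ) : t * expSlope t = exp t - 1 := by
  simpa [expSlope] using sub_smul_dslope exp 0 t

theorem expSlope_zero : expSlope 0 = 1 := by
  simp [expSlope, dslope_same]

theorem expSlope_pos (t : ℝ) : 0 < expSlope t := by
  have h := mul_expSlope t
  rcases lt_trichotomy t 0 with ht | rfl | ht
  · nlinarith [exp_lt_one_iff.2 ht]
  · simp [expSlope_zero]
  · nlinarith [one_lt_exp_iff.2 ht]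

theorem contDiff_expSlope {n : WithTop ℕ∞} : ContDiff ℝ n expSlope :=
  AnalyticOnNhd.contDiff fun _ _ => analyticAt_dslope analyticAt_rexp analyticAt_rexp

theorem differentiable_expSlope : Differentiable ℝ expSlope :=
  contDiff_expSlope.differentiable one_ne_zero

theorem expSlope_add_mul_deriv (t : ℝ) : expSlope t + t * deriv expSlope t = exp t := by
  have h : HasDerivAt (fun t => t * expSlope t) (1 * expSlope t + t * deriv expSlope t) t :=
    (hasDerivAt_id t).mul (differentiable_expSlope t).hasDerivAt
  rw [funext mul_expSlope] at h
  simpa using ((hasDerivAt_exp t).sub_const 1).unique h |>.symm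

noncomputable def logExpSlope (t : ℝ) : ℝ := log (expSlope t)

theorem contDiff_logExpSlope {n : WithTop ℕ∞} : ContDiff ℝ n logExpSlope :=
  contDiff_expSlope.log fun t => (expSlope_pos t).ne'

noncomputable def bernoulli'GenFun (t : ℝ) : ℝ := exp t / expSlope t

theorem contDiff_bernoulli'GenFun {n : WithTop ℕ∞} : ContDiff ℝ n bernoulli'GenFun :=
  contDiff_exp.div contDiff_expSlope fun t => (expSlope_pos t).ne'

theorem bernoulli'GenFun_mul_exp (t : ℝ) :
    bernoulli'GenFun t * exp t = bernoulli'GenFun t + t * exp t := by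
  have h := mul_expSlope t
  have hG := (expSlope_pos t).ne'
  unfold bernoulli'GenFun
  field_simp
  linear_combination -h

theorem mul_deriv_logExpSlope (t : ℝ) :
    t * deriv logExpSlope t = bernoulli'GenFun t - 1 := by
  have hG := (expSlope_pos t).ne'
  have hderiv : deriv logExpSlope t = deriv expSlope t / expSlope t :=
    ((differentiable_expSlope t).hasDerivAt.log hG).deriv
  rw [hderiv, bernoulli'GenFun, ← expSlope_add_mul_deriv t]
  field_simp
  ring

theorem sum_choose_mul_iteratedDeriv_bernoulli'GenFun (n : ℕ) :
    ∑ i ∈ range n, (n.choose i : ℝ) * iteratedDeriv i bernoulli'GenFun 0 = n := by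
  have h := congrArg (fun f => iteratedDeriv n f 0) (funext bernoulli'GenFun_mul_exp)
  rw [iteratedDeriv_fun_mul contDiff_bernoulli'GenFun.contDiffAt contDiff_exp.contDiffAt,
    iteratedDeriv_fun_add (g := fun t => t * exp t) contDiff_bernoulli'GenFun.contDiffAt
      (contDiff_id.mul contDiff_exp).contDiffAt,
    iteratedDeriv_id_mul_zero contDiff_exp.contDiffAt, sum_range_succ] at h
  have hexp (m : ℕ) : iteratedDeriv m exp 0 = 1 := by
    simp [iteratedDeriv_eq_iterate, iter_deriv_exp]
  simp only [hexp, mul_one, Nat.choose_self, Nat.cast_one, one_mul] at h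
  linarith

theorem iteratedDeriv_bernoulli'GenFun_zero (n : ℕ) :
    iteratedDeriv n bernoulli'GenFun 0 = bernoulli' n :=
  eq_bernoulli'_of_sum_choose_mul sum_choose_mul_iteratedDeriv_bernoulli'GenFun n

theorem iteratedDeriv_logExpSlope_zero {r : ℕ} (hr : r ≠ 0) :
    iteratedDeriv r logExpSlope 0 = bernoulli' r / r := by
  obtain ⟨s, rfl⟩ := Nat.exists_eq_succ_of_ne_zero hr
  have h := congrArg (fun f => iteratedDeriv (s + 1) f 0) (funext mul_deriv_logExpSlope)
  rw [iteratedDeriv_id_mul_zero contDiff_logExpSlope.deriv'.contDiffAt,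
    iteratedDeriv_fun_sub contDiff_bernoulli'GenFun.contDiffAt contDiff_const.contDiffAt,
    iteratedDeriv_bernoulli'GenFun_zero, ← iteratedDeriv_succ'] at h
  rw [eq_div_iff (by positivity)]
  simpa [iteratedDeriv_const, mul_comm] using h

theorem sum_coeff_mul_exp_eq_aeval (F : ℚ[X]) (t : ℝ) :
    ∑ j ∈ range (F.natDegree + 1), (F.coeff j : ℝ) * exp (t * j) = aeval (exp t) F := by
  rw [aeval_eq_sum_range]
  refine sum_congr rfl fun j _ => ?_
  rw [← exp_nat_mul, mul_comm t, Algebra.smul_def, eq_ratCast]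

theorem aeval_exp_qInt_mul_expSlope (n : ℕ) (t : ℝ) :
    aeval (exp t) (qInt n) * expSlope t = n * expSlope (n * t) := by
  have hgeom : aeval (exp t) (qInt n) * (exp t - 1) = exp (n * t) - 1 := by
    simp [qInt, geom_sum_mul, exp_nat_mul]
  rcases eq_or_ne t 0 with rfl | ht
  · simp [qInt, expSlope_zero]
  · apply mul_left_cancel₀ ht
    linear_combination mul_expSlope t * aeval (exp t) (qInt n) - mul_expSlope (n * t)
      + hgeom

section ProductOfQIntegers

variable {k : ℕ} {a b : Fin k → ℕ} {F : ℚ[X]}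

theorem aeval_exp_mul_prod_expSlope (hF : F * ∏ i, qInt (b i) = ∏ i, qInt (a i)) (t : ℝ) :
    aeval (exp t) F * ∏ i, (b i * expSlope (b i * t)) = ∏ i, (a i * expSlope (a i * t)) := by
  have h := congrArg (fun P => aeval (exp t) P * expSlope t ^ k) hF
  simp only [map_mul, map_prod] at h
  simpa only [← aeval_exp_qInt_mul_expSlope, prod_mul_distrib, prod_const, card_univ,
    Fintype.card_fin, mul_assoc] using h

theorem eval_one_mul_prod (hF : F * ∏ i, qInt (b i) = ∏ i, qInt (a i)) :
    F.eval 1 * ∏ i, (b i : ℚ) = ∏ i, (a i : ℚ) := by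
  simpa [qInt, eval_prod, eval_finsetSum] using congrArg (eval 1) hF

theorem eval_one_pos (ha : ∀ i, 0 < a i) (hb : ∀ i, 0 < b i)
    (hF : F * ∏ i, qInt (b i) = ∏ i, qInt (a i)) : 0 < F.eval 1 := by
  have hbpos : (0 : ℚ) < ∏ i, (b i : ℚ) := prod_pos fun i _ => by exact_mod_cast hb i
  rw [eq_div_iff hbpos.ne' |>.2 (eval_one_mul_prod hF)]
  exact div_pos (prod_pos fun i _ => by exact_mod_cast ha i) hbpos

theorem aeval_exp_eq_eval_one_mul_prod (hb : ∀ i, 0 < b i)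
    (hF : F * ∏ i, qInt (b i) = ∏ i, qInt (a i)) (t : ℝ) :
    aeval (exp t) F = ((F.eval 1 : ℚ) : ℝ) * ∏ i, expSlope (a i * t) / expSlope (b i * t) := by
  have ht := aeval_exp_mul_prod_expSlope hF t
  have h0 : ((F.eval 1 : ℚ) : ℝ) * ∏ i, (b i : ℝ) = ∏ i, (a i : ℝ) := by
    exact_mod_cast eval_one_mul_prod hF
  have hbpos : (0 : ℝ) < ∏ i, (b i : ℝ) := prod_pos fun i _ => by exact_mod_cast hb i
  have hGpos : 0 < ∏ i, expSlope (b i * t) := prod_pos fun i _ => expSlope_pos _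
  rw [prod_div_distrib, mul_div_assoc', eq_div_iff hGpos.ne']
  apply mul_left_cancel₀ hbpos.ne'
  rw [prod_mul_distrib, prod_mul_distrib] at ht
  linear_combination ht - (∏ i, expSlope (a i * t)) * h0

theorem polyCGF_eq_sum_logExpSlope (ha : ∀ i, 0 < a i) (hb : ∀ i, 0 < b i)
    (hF : F * ∏ i, qInt (b i) = ∏ i, qInt (a i)) :
    polyCGF F = fun t => ∑ i, (logExpSlope (a i * t) - logExpSlope (b i * t)) := by
  funext t
  have hF1 : (0 : ℝ) < (F.eval 1 : ℚ) := by exact_mod_cast eval_one_pos ha hb hF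
  have hG (i : Fin k) : expSlope (a i * t) / expSlope (b i * t) ≠ 0 :=
    (div_pos (expSlope_pos _) (expSlope_pos _)).ne'
  rw [polyCGF, sum_coeff_mul_exp_eq_aeval, aeval_exp_eq_eval_one_mul_prod hb hF,
    log_mul hF1.ne' (prod_ne_zero_iff.2 fun i _ => hG i), log_prod fun i _ => hG i,
    add_sub_cancel_left]
  exact sum_congr rfl fun i _ => log_div (expSlope_pos _).ne' (expSlope_pos _).ne'

end ProductOfQIntegers

theorem stmt_6_general (k : ℕ) (a b : Fin k → ℕ) (ha : ∀ i, 0 < a i) (hb : ∀ i, 0 < b i)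
    (F : Polynomial ℚ)
    (hF : F * ∏ i, qInt (b i) = ∏ i, qInt (a i))
    (r : ℕ) (hr : 1 ≤ r) :
    polyCumulant r F
      = ((bernoulli' r : ℝ) / r) * ∑ i, (((a i : ℝ)) ^ r - ((b i : ℝ)) ^ r) := by
  have hL {n : ℕ} (c : ℝ) : ContDiffAt ℝ n (fun t => logExpSlope (c * t)) 0 :=
    (contDiff_logExpSlope.comp (contDiff_const.mul contDiff_id)).contDiffAt
  rw [polyCumulant, polyCGF_eq_sum_logExpSlope ha hb hF,
    iteratedDeriv_fun_sum fun i _ => (hL _).sub (hL _), mul_sum]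
  refine sum_congr rfl fun i _ => ?_
  rw [iteratedDeriv_fun_sub (hL _) (hL _), iteratedDeriv_comp_const_mul contDiff_logExpSlope,
    iteratedDeriv_comp_const_mul contDiff_logExpSlope]
  simp only [mul_zero, iteratedDeriv_logExpSlope_zero (by omega : r ≠ 0)]
  ring

theorem stmt_6 (k : ℕ) (a b : Fin k → ℕ) (ha : ∀ i, 0 < a i) (hb : ∀ i, 0 < b i)
    (F : Polynomial ℚ)
    (hF : F * ∏ i, qInt (b i) = ∏ i, qInt (a i))
    (hpos : ∀ j, 0 ≤ F.coeff j)
    (r : ℕ) (hr : 1 ≤ r) :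
    polyCumulant r F
      = ((bernoulli' r : ℝ) / r) * ∑ i, (((a i : ℝ)) ^ r - ((b i : ℝ)) ^ r) :=
  stmt_6_general k a b ha hb F hF r hr
end

section
/- For rational numbers x_1, ..., x_n pairwise distinct, with P(x) = (n+2x+1)∏_{i=1}^n (x+i), the partial-fractions sum Σ_{j=1}^n P(x_j) / ∏_{i≠j}(x_j − x_i) equals 2 Σ_{1≤i≤j≤n} x_i x_j + (n+1)² Σ_{i=1}^n x_i + n(n+1)(3n²+5n+4)/12. -/
open Polynomial Finset

private lemma prodXC_monic {ι : Type*} (s : Finset ι) (v : ι → ℚ) :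
    (∏ i ∈ s, (X + C (v i))).Monic :=
  monic_prod_of_monic _ _ fun i _ => monic_X_add_C _

private lemma prodXC_natDegree {ι : Type*} (s : Finset ι) (v : ι → ℚ) :
    (∏ i ∈ s, (X + C (v i))).natDegree = s.card := by
  rw [natDegree_prod_of_monic _ _ fun i _ => monic_X_add_C _]
  simp

private lemma prodXC_coeff_top {ι : Type*} (s : Finset ι) (v : ι → ℚ) :
    (∏ i ∈ s, (X + C (v i))).coeff s.card = 1 := by
  have h := (prodXC_monic s v).coeff_natDegree
  rwa [prodXC_natDegree] at h

private lemma prodXC_coeff_hi {ι : Type*} (s : Finset ι) (v : ι → ℚ) {k : ℕ}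
    (h : s.card < k) : (∏ i ∈ s, (X + C (v i))).coeff k = 0 :=
  coeff_eq_zero_of_natDegree_lt (by rwa [prodXC_natDegree])

private lemma prodXC_coeff_one {ι : Type*} [DecidableEq ι] (v : ι → ℚ) :
    ∀ (s : Finset ι) (m : ℕ), s.card = m + 1 →
      (∏ i ∈ s, (X + C (v i))).coeff m = ∑ i ∈ s, v i := by
  intro s
  induction s using Finset.induction with
  | empty => intro m h; simp at h
  | @insert a s ha ih =>
    intro m h
    rw [card_insert_of_notMem ha] at h
    have hs : s.card = m := by omega
    rcases m with _ | m
    · have : s = ∅ := card_eq_zero.mp hs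
      subst this
      simp
    · rw [prod_insert ha, add_mul, coeff_add, coeff_X_mul, coeff_C_mul,
        ih m hs, sum_insert ha]
      have htop : (∏ i ∈ s, (X + C (v i))).coeff (m + 1) = 1 := by
        have := prodXC_coeff_top s v; rwa [hs] at this
      rw [htop]
      ring

private lemma prodXC_coeff_two {ι : Type*} [DecidableEq ι] (v : ι → ℚ) :
    ∀ (s : Finset ι) (m : ℕ), s.card = m + 2 →
      (∏ i ∈ s, (X + C (v i))).coeff m
        = ((∑ i ∈ s, v i) ^ 2 - ∑ i ∈ s, (v i) ^ 2) / 2 := by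
  intro s
  induction s using Finset.induction with
  | empty => intro m h; simp at h
  | @insert a s ha ih =>
    intro m h
    rw [card_insert_of_notMem ha] at h
    have hs : s.card = m + 1 := by omega
    rcases m with _ | m
    · obtain ⟨b, rfl⟩ := card_eq_one.mp hs
      have hab : a ≠ b := by simpa using ha
      rw [prod_insert ha, prod_singleton, mul_coeff_zero]
      simp [sum_insert ha]
      ring
    · rw [prod_insert ha, add_mul, coeff_add, coeff_X_mul, coeff_C_mul,
        ih m hs, prodXC_coeff_one v s (m + 1) hs, sum_insert ha, sum_insert ha]
      ring

private lemma gauss1 (n : ℕ) : ∑ i ∈ range n, ((i : ℚ) + 1) = n * (n + 1) / 2 := by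
  induction n with
  | zero => simp
  | succ k ih => rw [sum_range_succ, ih]; push_cast; ring

private lemma gauss2 (n : ℕ) :
    ∑ i ∈ range n, ((i : ℚ) + 1) ^ 2 = (n : ℚ) * ((n : ℚ) + 1) * (2 * (n : ℚ) + 1) / 6 := by
  induction n with
  | zero => simp
  | succ k ih => rw [sum_range_succ, ih]; push_cast; ring

private lemma pair_sum (n : ℕ) (x : Fin n → ℚ) :
    2 * (∑ i : Fin n, ∑ j ∈ Finset.univ.filter (fun j : Fin n => i ≤ j), x i * x j)
      = (∑ i : Fin n, x i) ^ 2 + ∑ i : Fin n, (x i) ^ 2 := by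
  have hswap :
      (∑ i : Fin n, ∑ j ∈ Finset.univ.filter (fun j : Fin n => i ≤ j), x i * x j)
        = ∑ j : Fin n, ∑ i ∈ Finset.univ.filter (fun i : Fin n => i ≤ j), x i * x j :=
    Finset.sum_comm' (by intro i j; simp)
  have hsw2 :
      (∑ i : Fin n, ∑ j ∈ Finset.univ.filter (fun j : Fin n => i ≤ j), x i * x j)
        = ∑ i : Fin n, ∑ j ∈ Finset.univ.filter (fun j : Fin n => j ≤ i), x i * x j := by
    rw [hswap]
    refine Finset.sum_congr rfl fun i _ => Finset.sum_congr rfl fun j _ => mul_comm _ _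
  have key : ∀ i : Fin n,
      (∑ j ∈ Finset.univ.filter (fun j : Fin n => i ≤ j), x i * x j)
        + (∑ j ∈ Finset.univ.filter (fun j : Fin n => j ≤ i), x i * x j)
        = (∑ j : Fin n, x i * x j) + x i * x i := by
    intro i
    rw [← Finset.sum_union_inter]
    congr 1
    · apply Finset.sum_congr _ fun _ _ => rfl
      ext j; simp [le_total i j]
    · have : (Finset.univ.filter (fun j : Fin n => i ≤ j))
          ∩ (Finset.univ.filter (fun j : Fin n => j ≤ i)) = {i} := by
        ext j; simp [le_antisymm_iff, eq_comm, and_comm]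
      rw [this, sum_singleton]
  calc 2 * (∑ i : Fin n, ∑ j ∈ Finset.univ.filter (fun j : Fin n => i ≤ j), x i * x j)
      = (∑ i : Fin n, ∑ j ∈ Finset.univ.filter (fun j : Fin n => i ≤ j), x i * x j)
        + ∑ i : Fin n, ∑ j ∈ Finset.univ.filter (fun j : Fin n => j ≤ i), x i * x j := by
        rw [← hsw2]; ring
    _ = ∑ i : Fin n, ((∑ j : Fin n, x i * x j) + x i * x i) := by
        rw [← Finset.sum_add_distrib]
        exact Finset.sum_congr rfl fun i _ => key i
    _ = (∑ i : Fin n, x i) ^ 2 + ∑ i : Fin n, (x i) ^ 2 := by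
        rw [Finset.sum_add_distrib, sq (∑ i : Fin n, x i), Finset.sum_mul_sum]
        refine congrArg₂ (· + ·) rfl (Finset.sum_congr rfl fun i _ => (sq (x i)).symm)

theorem stmt_13 (n : ℕ) (hn : 2 ≤ n) (x : Fin n → ℚ) (hx : Function.Injective x) :
    (∑ j : Fin n,
        (((n : ℚ) + 2 * x j + 1) * ∏ i ∈ Finset.range n, (x j + i + 1))
          / ∏ i ∈ Finset.univ.erase j, (x j - x i))
      = 2 * (∑ i : Fin n, ∑ j ∈ Finset.univ.filter (fun j : Fin n => i ≤ j), x i * x j)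
        + ((n : ℚ) + 1) ^ 2 * (∑ i : Fin n, x i)
        + (n : ℚ) * ((n : ℚ) + 1) * (3 * (n : ℚ) ^ 2 + 5 * n + 4) / 12 := by
  obtain ⟨m, rfl⟩ : ∃ m, n = m + 2 := ⟨n - 2, by omega⟩
  classical
  set E1 : ℚ := ∑ i : Fin (m + 2), x i with hE1
  set P2 : ℚ := ∑ i : Fin (m + 2), (x i) ^ 2 with hP2
  set G1 : ℚ := ∑ i ∈ range (m + 2), ((i : ℚ) + 1) with hG1
  set G2 : ℚ := ∑ i ∈ range (m + 2), ((i : ℚ) + 1) ^ 2 with hG2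
  set M : ℚ[X] := ∏ i ∈ range (m + 2), (X + C ((i : ℚ) + 1)) with hM
  set p : ℚ[X] := (C ((m : ℚ) + 3) + C 2 * X) * M with hp
  set w : Fin (m + 2) → ℚ := fun j => (∏ i ∈ Finset.univ.erase j, (x j - x i))⁻¹ with hw
  set N : ℚ[X] := ∏ i : Fin (m + 2), (X + C (-(x i))) with hNdef
  set q : ℚ[X] := ∑ j : Fin (m + 2),
    C (p.eval (x j) * w j) * ∏ i ∈ Finset.univ.erase j, (X + C (-(x i))) with hq
  have hwne : ∀ j, (∏ i ∈ Finset.univ.erase j, (x j - x i)) ≠ 0 := by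
    intro j
    rw [Finset.prod_ne_zero_iff]
    intro i hi
    have : i ≠ j := (Finset.mem_erase.mp hi).1
    exact sub_ne_zero.mpr fun h => this (hx h.symm)
  -- q interpolates p at the nodes
  have hqeval : ∀ k, q.eval (x k) = p.eval (x k) := by
    intro k
    rw [hq, eval_finset_sum]
    rw [Finset.sum_eq_single k]
    · rw [eval_mul, eval_C, eval_prod]
      have hpe : (∏ i ∈ Finset.univ.erase k, eval (x k) (X + C (-(x i))))
          = ∏ i ∈ Finset.univ.erase k, (x k - x i) :=
        Finset.prod_congr rfl fun i _ => by simp [sub_eq_add_neg]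
      rw [hpe, hw, mul_assoc, inv_mul_cancel₀ (hwne k), mul_one]
    · intro j _ hjk
      have hk : k ∈ Finset.univ.erase j := Finset.mem_erase.mpr ⟨hjk.symm, Finset.mem_univ _⟩
      rw [eval_mul, eval_prod, Finset.prod_eq_zero hk (by simp), mul_zero]
    · exact fun h => absurd (Finset.mem_univ k) h
  -- N divides p - q
  obtain ⟨r, hr⟩ : N ∣ p - q := by
    have hNeq : N = ∏ i : Fin (m + 2), (X - C (x i)) :=
      Finset.prod_congr rfl fun i _ => by rw [map_neg, sub_eq_add_neg]
    rw [hNeq]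
    apply Finset.prod_dvd_of_coprime
    · exact (Polynomial.pairwise_coprime_X_sub_C hx).set_pairwise _
    · intro i _
      rw [dvd_iff_isRoot]
      simp [IsRoot, hqeval i]
  -- coefficients of N
  have hcard : (Finset.univ : Finset (Fin (m + 2))).card = m + 2 := by simp
  have hN_top : N.coeff (m + 2) = 1 := by
    have := prodXC_coeff_top (Finset.univ : Finset (Fin (m + 2))) (fun i => -(x i))
    rwa [hcard] at this
  have hN_hi : N.coeff (m + 3) = 0 :=
    prodXC_coeff_hi _ _ (by rw [hcard]; omega)
  have hN1 : N.coeff (m + 1) = -E1 := by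
    rw [hNdef, prodXC_coeff_one _ _ (m + 1) (by rw [hcard])]
    simp [hE1]
  have hN0 : N.coeff m = (E1 ^ 2 - P2) / 2 := by
    rw [hNdef, prodXC_coeff_two _ _ m (by rw [hcard])]
    have h1 : (∑ i : Fin (m + 2), -x i) = -E1 := by simp [hE1]
    have h2 : (∑ i : Fin (m + 2), (-x i) ^ 2) = P2 := by
      rw [hP2]; exact Finset.sum_congr rfl fun i _ => by ring
    rw [h1, h2]; ring
  -- coefficients of M
  have hM_top : M.coeff (m + 2) = 1 := by
    have := prodXC_coeff_top (range (m + 2)) (fun i => (i : ℚ) + 1)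
    rwa [card_range] at this
  have hM_hi : M.coeff (m + 3) = 0 :=
    prodXC_coeff_hi _ _ (by rw [card_range]; omega)
  have hM1 : M.coeff (m + 1) = G1 :=
    prodXC_coeff_one _ _ (m + 1) (by rw [card_range])
  have hM0 : M.coeff m = (G1 ^ 2 - G2) / 2 :=
    prodXC_coeff_two _ _ m (by rw [card_range])
  -- coefficients of p
  have hpeq : p = C ((m : ℚ) + 3) * M + C 2 * (X * M) := by rw [hp]; ring
  have hpco : ∀ k, p.coeff (k + 1) = ((m : ℚ) + 3) * M.coeff (k + 1) + 2 * M.coeff k := by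
    intro k
    rw [hpeq, coeff_add, coeff_C_mul, coeff_C_mul, coeff_X_mul]
  have hp3 : p.coeff (m + 3) = 2 := by
    rw [hpco (m + 2), hM_hi, hM_top]; ring
  have hp2 : p.coeff (m + 2) = ((m : ℚ) + 3) + 2 * G1 := by
    rw [hpco (m + 1), hM_top, hM1]; ring
  have hp1 : p.coeff (m + 1) = ((m : ℚ) + 3) * G1 + (G1 ^ 2 - G2) := by
    rw [hpco m, hM1, hM0]; ring
  -- coefficients of q
  have hec : ∀ j : Fin (m + 2), (Finset.univ.erase j).card = m + 1 := by
    intro j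
    rw [Finset.card_erase_of_mem (Finset.mem_univ _), hcard]
    omega
  have hq_coeff : ∀ k, q.coeff k = ∑ j : Fin (m + 2),
      (p.eval (x j) * w j) * (∏ i ∈ Finset.univ.erase j, (X + C (-(x i)))).coeff k := by
    intro k
    rw [hq, finset_sum_coeff]
    exact Finset.sum_congr rfl fun j _ => by rw [coeff_C_mul]
  have hq3 : q.coeff (m + 3) = 0 := by
    rw [hq_coeff]
    refine Finset.sum_eq_zero fun j _ => ?_
    rw [prodXC_coeff_hi _ _ (by rw [hec j]; omega), mul_zero]
  have hq2 : q.coeff (m + 2) = 0 := by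
    rw [hq_coeff]
    refine Finset.sum_eq_zero fun j _ => ?_
    rw [prodXC_coeff_hi _ _ (by rw [hec j]; omega), mul_zero]
  have hq1 : q.coeff (m + 1) = ∑ j : Fin (m + 2), p.eval (x j) * w j := by
    rw [hq_coeff]
    refine Finset.sum_congr rfl fun j _ => ?_
    have := prodXC_coeff_top (Finset.univ.erase j) (fun i => -(x i))
    rw [hec j] at this
    rw [this, mul_one]
  -- degree of r
  have hNne : N ≠ 0 := (prodXC_monic _ _).ne_zero
  have hndN : N.natDegree = m + 2 := by
    rw [hNdef, prodXC_natDegree, hcard]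
  have hrne : r ≠ 0 := by
    rintro rfl
    rw [mul_zero, sub_eq_zero] at hr
    have : p.coeff (m + 3) = q.coeff (m + 3) := by rw [hr]
    rw [hp3, hq3] at this
    norm_num at this
  have hpnd : p.natDegree ≤ m + 3 := by
    refine natDegree_mul_le.trans ?_
    have h1 : (C ((m : ℚ) + 3) + C 2 * X).natDegree ≤ 1 := by
      refine (natDegree_add_le _ _).trans ?_
      simp [natDegree_C_mul_X (2 : ℚ) (by norm_num)]
    have h2 : M.natDegree = m + 2 := by rw [hM, prodXC_natDegree, card_range]
    omega
  have hqnd : q.natDegree ≤ m + 3 := by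
    rw [hq]
    refine natDegree_sum_le_of_forall_le _ _ fun j _ => ?_
    refine natDegree_mul_le.trans ?_
    have h2 : (∏ i ∈ Finset.univ.erase j, (X + C (-(x i)))).natDegree = m + 1 := by
      rw [prodXC_natDegree, hec j]
    rw [h2, natDegree_C]
    omega
  have hrdeg : r.natDegree ≤ 1 := by
    have h1 : (N * r).natDegree = m + 2 + r.natDegree := by
      rw [natDegree_mul hNne hrne, hndN]
    have h2 : (N * r).natDegree ≤ m + 3 := by
      rw [← hr]
      exact (natDegree_sub_le p q).trans (by omega)
    omega
  set b : ℚ := r.coeff 1 with hb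
  set a : ℚ := r.coeff 0 with ha
  have hreq : r = C b * X + C a := eq_X_add_C_of_natDegree_le_one hrdeg
  have hpq : p = q + N * r := by rw [← hr]; ring
  have hco : ∀ k, p.coeff (k + 1)
      = q.coeff (k + 1) + (b * N.coeff k + a * N.coeff (k + 1)) := by
    intro k
    have hNr : N * r = C b * (X * N) + C a * N := by rw [hreq]; ring
    rw [hpq, coeff_add, hNr, coeff_add, coeff_C_mul, coeff_C_mul, coeff_X_mul]
  have e3 := hco (m + 2)
  rw [hp3, hq3, hN_top, hN_hi] at e3
  have hbval : b = 2 := by linarith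
  have e2 := hco (m + 1)
  rw [hp2, hq2, hN1, hN_top, hbval] at e2
  have haval : a = ((m : ℚ) + 3) + 2 * G1 + 2 * E1 := by linarith
  have e1 := hco m
  rw [hp1, hq1, hN0, hN1, hbval, haval] at e1
  -- identify the LHS of the statement with the interpolation sum
  have hLHS : (∑ j : Fin (m + 2),
        ((((m + 2 : ℕ) : ℚ) + 2 * x j + 1) * ∏ i ∈ Finset.range (m + 2), (x j + i + 1))
          / ∏ i ∈ Finset.univ.erase j, (x j - x i))
      = ∑ j : Fin (m + 2), p.eval (x j) * w j := by
    refine Finset.sum_congr rfl fun j _ => ?_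
    rw [div_eq_mul_inv, hw]
    congr 1
    rw [hp, eval_mul, eval_add, eval_C, eval_mul, eval_C, eval_X, hM, eval_prod]
    have hprod : (∏ i ∈ range (m + 2), eval (x j) (X + C ((i : ℚ) + 1)))
        = ∏ i ∈ range (m + 2), (x j + (i : ℚ) + 1) :=
      Finset.prod_congr rfl fun i _ => by simp; ring
    rw [hprod]
    push_cast
    ring
  rw [hLHS, pair_sum (m + 2) x, ← hE1, ← hP2]
  have hG1v : G1 = ((m : ℚ) + 2) * ((m : ℚ) + 3) / 2 := by
    rw [hG1, gauss1]; push_cast; ring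
  have hG2v : G2 = ((m : ℚ) + 2) * ((m : ℚ) + 3) * (2 * ((m : ℚ) + 2) + 1) / 6 := by
    rw [hG2, gauss2]; push_cast; ring
  rw [hG1v, hG2v] at e1
  push_cast
  linarith [e1]
end

section
/- For any finite sequence of distinct field elements x_1,...,x_n in a field of characteristic zero and any polynomial P of degree at most n+1, the expression Σ_{j=1}^n P(x_j)/∏_{i≠j}(x_j−x_i) is a polynomial function of (x_1,...,x_n) that is symmetric and of degree at most 2 in the x_j. -/
/-!
The sum `∑ⱼ P(xⱼ) / ∏_{i ≠ j} (xⱼ - xᵢ)` is the coefficient of `X ^ (n - 1)` in the Lagrange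
interpolant of `P` at the nodes `xⱼ`, i.e. in `P mod N` with `N = ∏ᵢ (X - xᵢ)`. As `deg P ≤ n + 1`,
the quotient `P /ₘ N` is linear, and comparing the coefficients of `X ^ (n + 1)`, `X ^ n`,
`X ^ (n - 1)` in `P = N q + r` expresses that coefficient through the top three coefficients of `P`
and those of `N`, which are `1`, `-e₁`, `e₂` by Vieta.
-/

open Finset Polynomial

namespace Polynomial

variable {R : Type*} [CommRing R]

theorem coeff_modByMonic_of_natDegree_le_succ {N P : R[X]} {m : ℕ} (hN : N.Monic)
    (hNdeg : N.natDegree = m + 1) (hP : P.natDegree ≤ m + 2) :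
    (P %ₘ N).coeff m = P.coeff m - P.coeff (m + 1) * N.coeff m +
      P.coeff (m + 2) * (N.coeff m ^ 2 - (N * X).coeff m) := by
  nontriviality R
  obtain ⟨a, b, hq⟩ : ∃ a b : R, P /ₘ N = C a * X + C b :=
    ⟨_, _, eq_X_add_C_of_natDegree_le_one (by rw [natDegree_divByMonic P hN]; omega)⟩
  have hdiv (k : ℕ) : (P %ₘ N).coeff k + (a * (N * X).coeff k + b * N.coeff k) = P.coeff k := by
    have h := congrArg (coeff · k) (modByMonic_add_div P N)
    simp only [hq, mul_add, coeff_add] at h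
    rw [← h, mul_left_comm, mul_comm N (C b), coeff_C_mul, coeff_C_mul]
  have hrem (k : ℕ) (hk : m + 1 ≤ k) : (P %ₘ N).coeff k = 0 :=
    coeff_eq_zero_of_degree_lt <| (degree_modByMonic_lt P hN).trans_le <| by
      rw [degree_eq_natDegree hN.ne_zero, hNdeg]; exact_mod_cast hk
  have hlead : N.coeff (m + 1) = 1 := hNdeg ▸ hN.coeff_natDegree
  have htop := hdiv (m + 2)
  have hnext := hdiv (m + 1)
  rw [hrem _ (by omega), coeff_mul_X, hlead, coeff_eq_zero_of_natDegree_lt (by omega)] at htop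
  rw [hrem _ le_rfl, coeff_mul_X, hlead] at hnext
  linear_combination hdiv m - N.coeff m * hnext - ((N * X).coeff m - N.coeff m ^ 2) * htop

end Polynomial

namespace Lagrange

section CommRing

variable {R ι : Type*} [CommRing R] {s : Finset ι} {v : ι → R}

theorem coeff_nodal_mul_X {m : ℕ} (hs : #s = m + 1) :
    (nodal s v * X).coeff m = (s.val.map v).esymm 2 := by
  have hcard : Multiset.card (s.val.map v) = m + 1 := by simpa using hs
  have hnodal : nodal s v = ((s.val.map v).map (X - C ·)).prod := by
    rw [nodal, Finset.prod_eq_multiset_prod, Multiset.map_map]; rfl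
  cases m with
  | zero =>
    rw [coeff_mul_X_zero, Multiset.esymm, Multiset.powersetCard_eq_empty _ (by omega)]
    simp
  | succ m =>
    rw [coeff_mul_X, hnodal, Multiset.prod_X_sub_C_coeff _ (by omega), hcard,
      show m + 1 + 1 - m = 2 by omega]
    simp

end CommRing

variable {F ι : Type*} [Field F] [DecidableEq ι] {s : Finset ι} {v : ι → F}

theorem coeff_interpolate_card_sub_one (r : ι → F) :
    (interpolate s v r).coeff (#s - 1) = ∑ i ∈ s, r i / ∏ j ∈ s.erase i, (v i - v j) := by
  rw [interpolate_apply, finsetSum_coeff]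
  refine sum_congr rfl fun i hi => ?_
  have hdeg : (nodal (s.erase i) v).natDegree = #s - 1 := by
    rw [natDegree_nodal, card_erase_of_mem hi]
  rw [coeff_C_mul, basis_eq_prod_sub_inv_mul_nodal_div hi, ← nodal_erase_eq_nodal_div hi,
    coeff_C_mul, ← hdeg, nodal_monic.coeff_natDegree, nodalWeight, mul_one, div_eq_mul_inv,
    prod_inv_distrib]

theorem interpolate_eval_eq_modByMonic_nodal (hvs : Set.InjOn v s) (P : F[X]) :
    interpolate s v (fun i => P.eval (v i)) = P %ₘ nodal s v := by
  refine (eq_interpolate_of_eval_eq _ hvs ?_ fun i hi => ?_).symm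
  · exact (degree_modByMonic_lt P nodal_monic).trans_eq degree_nodal
  · exact eval₂_modByMonic_eq_self_of_root (eval_nodal_at_node hi)

end Lagrange

namespace MvPolynomial

theorem isHomogeneous_esymm (σ R : Type*) [Fintype σ] [CommSemiring R] (n : ℕ) :
    (esymm σ R n).IsHomogeneous n := by
  refine IsHomogeneous.sum _ _ _ fun t ht => ?_
  simpa [(mem_powersetCard.mp ht).2] using
    IsHomogeneous.prod t (fun i => X i) (fun _ => 1) fun i _ => isHomogeneous_X R i

variable (σ : Type*) {R : Type*} [Fintype σ] [CommRing R]

/-- `a h₀ + b h₁ + c h₂` for the complete homogeneous symmetric polynomials `h₀ = 1`, `h₁ = e₁`,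
`h₂ = e₁² - e₂`. -/
noncomputable def symmQuadratic (a b c : R) : MvPolynomial σ R :=
  C a + C b * esymm σ R 1 + C c * (esymm σ R 1 ^ 2 - esymm σ R 2)

variable {σ}

theorem symmQuadratic_isSymmetric (a b c : R) : (symmQuadratic σ a b c).IsSymmetric :=
  ((IsSymmetric.C a).add ((IsSymmetric.C b).mul (esymm_isSymmetric σ R 1))).add <|
    (IsSymmetric.C c).mul <|
      (sq (esymm σ R 1) ▸ (esymm_isSymmetric σ R 1).mul (esymm_isSymmetric σ R 1)).sub
        (esymm_isSymmetric σ R 2)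

theorem totalDegree_symmQuadratic_le (a b c : R) : (symmQuadratic σ a b c).totalDegree ≤ 2 := by
  have h₁ : (C b * esymm σ R 1).IsHomogeneous 1 := by
    simpa using (isHomogeneous_C σ b).mul (isHomogeneous_esymm σ R 1)
  have h₂ : (C c * (esymm σ R 1 ^ 2 - esymm σ R 2)).IsHomogeneous 2 := by
    simpa using (isHomogeneous_C σ c).mul
      (((isHomogeneous_esymm σ R 1).pow 2).sub (isHomogeneous_esymm σ R 2))
  refine (totalDegree_add _ _).trans (max_le ((totalDegree_add _ _).trans (max_le ?_ ?_)) ?_)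
  · simp
  · exact h₁.totalDegree_le.trans (by norm_num)
  · exact h₂.totalDegree_le

theorem eval_symmQuadratic (a b c : R) (x : σ → R) :
    eval x (symmQuadratic σ a b c) =
      a + b * ∑ i, x i + c * ((∑ i, x i) ^ 2 - (univ.val.map x).esymm 2) := by
  have he₂ : eval x (esymm σ R 2) = (univ.val.map x).esymm 2 := by
    simpa using aeval_esymm_eq_multiset_esymm σ R 2 x
  simp [symmQuadratic, esymm_one, he₂]

end MvPolynomial

open Lagrange in
theorem stmt_14_general (K : Type*) [Field K] (n : ℕ)
    (P : Polynomial K) (hP : P.degree ≤ n + 1) :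
    ∃ Q : MvPolynomial (Fin n) K, Q.IsSymmetric ∧ Q.totalDegree ≤ 2 ∧
      ∀ x : Fin n → K, Function.Injective x →
        (∑ j : Fin n, P.eval (x j) / ∏ i ∈ Finset.univ.erase j, (x j - x i))
          = MvPolynomial.eval x Q := by
  rcases n with _ | m
  · exact ⟨0, .zero, by simp, fun x _ => by simp⟩
  refine ⟨MvPolynomial.symmQuadratic _ (P.coeff m) (P.coeff (m + 1)) (P.coeff (m + 2)),
    MvPolynomial.symmQuadratic_isSymmetric _ _ _, MvPolynomial.totalDegree_symmQuadratic_le _ _ _,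
    fun x hx => ?_⟩
  have hcard : #(univ : Finset (Fin (m + 1))) = m + 1 := by simp
  have hdeg : P.natDegree ≤ m + 2 := natDegree_le_iff_degree_le.mpr (by exact_mod_cast hP)
  have he₁ : (nodal univ x).coeff m = -∑ i, x i := by
    simpa [nodal, hcard] using prod_X_sub_C_coeff_card_pred univ x (by simp)
  calc ∑ j, P.eval (x j) / ∏ i ∈ univ.erase j, (x j - x i)
      = (interpolate univ x fun j => P.eval (x j)).coeff m := by
        simpa only [hcard, Nat.add_sub_cancel] using
          (coeff_interpolate_card_sub_one (s := univ) (v := x) _).symm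
    _ = (P %ₘ nodal univ x).coeff m := by rw [interpolate_eval_eq_modByMonic_nodal hx.injOn]
    _ = P.coeff m - P.coeff (m + 1) * (nodal univ x).coeff m +
          P.coeff (m + 2) * ((nodal univ x).coeff m ^ 2 - (nodal univ x * X).coeff m) :=
        coeff_modByMonic_of_natDegree_le_succ nodal_monic (by rw [natDegree_nodal, hcard]) hdeg
    _ = MvPolynomial.eval x
          (MvPolynomial.symmQuadratic _ (P.coeff m) (P.coeff (m + 1)) (P.coeff (m + 2))) := by
        rw [MvPolynomial.eval_symmQuadratic, he₁, coeff_nodal_mul_X hcard]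
        ring

theorem stmt_14 (K : Type*) [Field K] [CharZero K] (n : ℕ)
    (P : Polynomial K) (hP : P.degree ≤ n + 1) :
    ∃ Q : MvPolynomial (Fin n) K, Q.IsSymmetric ∧ Q.totalDegree ≤ 2 ∧
      ∀ x : Fin n → K, Function.Injective x →
        (∑ j : Fin n, P.eval (x j) / ∏ i ∈ Finset.univ.erase j, (x j - x i))
          = MvPolynomial.eval x Q :=
  stmt_14_general K n P hP
end
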